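/- arXiv:math/0609408 — 9 statements merged into one kernel-verified Lean document; each statement's English description precedes it below -/
import Mathlib

section
/- Let a be a prime number and p an integer such that p ≢ 0 (mod a), p ≢ −2a+1 (mod a²), and p ≢ −2a−1 (mod a²). Let λ(t) = a·t² − (2a+p)·t + a ∈ ℚ[t]. Then for every positive integer r, the polynomial λ(t^r) = a·t^{2r} − (2a+p)·t^r + a is irreducible in ℚ[t]. -/
open Polynomial

/-!
With `π = a` and `b = -(2a + p)` the polynomial is `π + b X^r + π X^{2r}`. It is primitive
because `π ∤ b`, so by Gauss's lemma it suffices to prove irreducibility over `ℤ`, and the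
argument works over any domain with a prime `π`. Modulo `π` the polynomial is `b X^r`, so the
reductions of the factors of a factorisation `g h` are monomials `X^i`, `X^j` with `i + j = r`:
`π` divides every coefficient of `g` except the `i`-th, and likewise for `h`. Since
`g₀ h₀ = π`, one of `i`, `j` is `0`, say `i = 0` and `j = r`. Unless `g` is a unit, comparing
leading coefficients shows that `h` has degree `r` and a unit leading coefficient. Then the
coefficient `b` of `X^r` is the unit `g₀ h_r` plus terms divisible by `π²`, which is excluded
by `p ≢ -2a ± 1 (mod a²)`.
-/

theorem Irreducible.isUnit_of_mul_eq_of_dvd_right {M : Type*} [CommMonoid M] {π x y : M}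
    (hπ : Irreducible π) (hxy : x * y = π) (hy : π ∣ y) : IsUnit x :=
  (hπ.isUnit_or_isUnit hxy.symm).resolve_right
    fun hyu => hπ.not_isUnit (isUnit_of_dvd_unit hy hyu)

namespace Polynomial

theorem coeff_eq_zero_iff_ne_natDegree_of_mul_eq_monomial {K : Type*} [Semiring K]
    [NoZeroDivisors K] {q s : K[X]} {n : ℕ} {c : K} (hc : c ≠ 0) (hqs : q * s = monomial n c)
    (k : ℕ) : q.coeff k = 0 ↔ k ≠ q.natDegree := by
  have hqs0 : q * s ≠ 0 := by rwa [hqs, Ne, monomial_eq_zero_iff]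
  have hq : q ≠ 0 := left_ne_zero_of_mul hqs0
  have hs : s ≠ 0 := right_ne_zero_of_mul hqs0
  have hdeg := natDegree_mul hq hs
  have htrail := natTrailingDegree_mul hq hs
  rw [hqs, natDegree_monomial_eq n hc] at hdeg
  rw [hqs, natTrailingDegree_monomial hc] at htrail
  have hq_le := natTrailingDegree_le_natDegree q
  have hs_le := natTrailingDegree_le_natDegree s
  refine ⟨fun hk hkd => by subst hkd; exact hq (leadingCoeff_eq_zero.mp hk), fun hk => ?_⟩
  rcases hk.lt_or_gt with hlt | hgt
  · exact coeff_eq_zero_of_lt_natTrailingDegree (by omega)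
  · exact coeff_eq_zero_of_natDegree_lt hgt

section Trinomial

variable {R : Type*} [CommRing R] {π b : R} {r : ℕ}

theorem map_mk_span_singleton_trinomial :
    (trinomial 0 r (2 * r) π b π).map (Ideal.Quotient.mk (Ideal.span {π})) =
      monomial r (Ideal.Quotient.mk (Ideal.span {π}) b) := by
  simp [trinomial_def, Ideal.Quotient.mk_singleton_self, C_mul_X_pow_eq_monomial]

theorem isPrimitive_trinomial (hπ : Irreducible π) (hb : ¬ π ∣ b) (hr : 0 < r) :
    (trinomial 0 r (2 * r) π b π).IsPrimitive := by
  refine isPrimitive_iff_isUnit_of_C_dvd.mpr fun c hc => ?_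
  have hcπ : c ∣ π := by
    simpa [trinomial_trailing_coeff' hr (by omega : r < 2 * r)] using
      (C_dvd_iff_dvd_coeff _ _).mp hc 0
  have hcb : c ∣ b := by
    simpa [trinomial_middle_coeff hr (by omega : r < 2 * r)] using
      (C_dvd_iff_dvd_coeff _ _).mp hc r
  exact (hπ.dvd_iff.mp hcπ).resolve_right fun hπc => hb (hπc.dvd.trans hcb)

theorem exists_dvd_coeff_iff_of_mul_eq_trinomial (hπ : Prime π) (hb : ¬ π ∣ b) {g h : R[X]}
    (hgh : g * h = trinomial 0 r (2 * r) π b π) :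
    ∃ i j, i + j = r ∧ (∀ k, π ∣ g.coeff k ↔ k ≠ i) ∧ (∀ k, π ∣ h.coeff k ↔ k ≠ j) := by
  have : (Ideal.span {π}).IsPrime := (Ideal.span_singleton_prime hπ.ne_zero).mpr hπ
  set φ := Ideal.Quotient.mk (Ideal.span {π})
  have hφb : φ b ≠ 0 := by rwa [Ne, Ideal.Quotient.eq_zero_iff_dvd]
  have hmap : g.map φ * h.map φ = monomial r (φ b) := by
    rw [← Polynomial.map_mul, hgh, map_mk_span_singleton_trinomial]
  have hdvd {q s : R[X]} (hqs : q.map φ * s.map φ = monomial r (φ b)) (k : ℕ) :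
      π ∣ q.coeff k ↔ k ≠ (q.map φ).natDegree := by
    rw [← Ideal.Quotient.eq_zero_iff_dvd, ← coeff_map]
    exact coeff_eq_zero_iff_ne_natDegree_of_mul_eq_monomial hφb hqs k
  refine ⟨_, _, ?_, hdvd hmap, hdvd ((mul_comm _ _).trans hmap)⟩
  have hne : g.map φ * h.map φ ≠ 0 := by rwa [hmap, Ne, monomial_eq_zero_iff]
  rw [← natDegree_mul (left_ne_zero_of_mul hne) (right_ne_zero_of_mul hne), hmap,
    natDegree_monomial_eq _ hφb]

variable [IsDomain R]

theorem isUnit_of_mul_eq_trinomial (hπ : Irreducible π)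
    (hb_unit : ∀ u, IsUnit u → ¬ π ^ 2 ∣ b - u) (hr : 0 < r) {g h : R[X]}
    (hgh : g * h = trinomial 0 r (2 * r) π b π)
    (hg : ∀ k, π ∣ g.coeff k ↔ k ≠ 0) (hh : ∀ k, π ∣ h.coeff k ↔ k ≠ r) : IsUnit g := by
  have hrr : r < 2 * r := by omega
  have hg0 : IsUnit (g.coeff 0) := by
    refine hπ.isUnit_of_mul_eq_of_dvd_right ?_ ((hh 0).mpr hr.ne)
    rw [← mul_coeff_zero, hgh, trinomial_trailing_coeff' hr hrr]
  by_contra hgu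
  have hgdeg : g.natDegree ≠ 0 := fun h0 =>
    hgu (by rw [eq_C_of_natDegree_eq_zero h0]; exact hg0.map C)
  have hlc : g.leadingCoeff * h.leadingCoeff = π := by
    rw [← leadingCoeff_mul, hgh, trinomial_leadingCoeff hr hrr hπ.ne_zero]
  have hhlc : IsUnit h.leadingCoeff :=
    hπ.isUnit_of_mul_eq_of_dvd_right ((mul_comm _ _).trans hlc) ((hg _).mpr hgdeg)
  have hhdeg : h.natDegree = r := by
    by_contra hne
    exact hπ.not_isUnit (isUnit_of_dvd_unit ((hh _).mpr hne) hhlc)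
  rw [leadingCoeff, hhdeg] at hhlc
  refine hb_unit _ (hg0.mul hhlc) ?_
  have h0r : ((0, r) : ℕ × ℕ) ∈ Finset.HasAntidiagonal.antidiagonal r :=
    Finset.HasAntidiagonal.mem_antidiagonal.mpr (zero_add r)
  rw [← trinomial_middle_coeff (u := π) (v := b) (w := π) hr hrr, ← hgh, coeff_mul,
    ← Finset.add_sum_erase _ _ h0r, add_sub_cancel_left, sq]
  refine Finset.dvd_sum fun x hx => mul_dvd_mul ((hg _).mpr ?_) ((hh _).mpr ?_)
  all_goals
    obtain ⟨hx0r, hxr⟩ := Finset.mem_erase.mp hx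
    rw [Finset.HasAntidiagonal.mem_antidiagonal] at hxr
    intro hx'
    exact hx0r (Prod.ext (by omega) (by omega))

theorem irreducible_trinomial (hπ : Prime π) (hb : ¬ π ∣ b)
    (hb_unit : ∀ u, IsUnit u → ¬ π ^ 2 ∣ b - u) (hr : 0 < r) :
    Irreducible (trinomial 0 r (2 * r) π b π) := by
  refine ⟨fun hu => ?_, fun g h hgh => ?_⟩
  · have hdeg := natDegree_eq_zero_of_isUnit hu
    rw [trinomial_natDegree hr (by omega) hπ.ne_zero] at hdeg
    omega
  obtain ⟨i, j, hij, hg, hh⟩ := exists_dvd_coeff_iff_of_mul_eq_trinomial hπ hb hgh.symm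
  have hij0 : i = 0 ∨ j = 0 := by
    by_contra! hne
    have hg0 : IsUnit (g.coeff 0) := by
      refine hπ.irreducible.isUnit_of_mul_eq_of_dvd_right ?_ ((hh 0).mpr hne.2.symm)
      rw [← mul_coeff_zero, ← hgh, trinomial_trailing_coeff' hr (by omega)]
    exact hπ.not_isUnit (isUnit_of_dvd_unit ((hg 0).mpr hne.1.symm) hg0)
  rcases hij0 with rfl | rfl
  · rw [zero_add] at hij
    exact .inl (isUnit_of_mul_eq_trinomial hπ.irreducible hb_unit hr hgh.symm hg (hij ▸ hh))
  · rw [add_zero] at hij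
    exact .inr (isUnit_of_mul_eq_trinomial hπ.irreducible hb_unit hr
      ((mul_comm _ _).trans hgh.symm) hh (hij ▸ hg))

end Trinomial

end Polynomial

/-- Let `a` be a prime and `p` an integer with `p ≢ 0 (mod a)`,
`p ≢ -2a+1 (mod a²)` and `p ≢ -2a-1 (mod a²)`.  Then for every positive integer `r`
the polynomial `a·t^{2r} - (2a+p)·t^r + a` is irreducible in `ℚ[t]`. -/
theorem polynomial_for_torsion_irreducible
    (a : ℕ) (ha : a.Prime) (p : ℤ)
    (h0 : ¬ (p ≡ 0 [ZMOD (a : ℤ)]))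
    (h1 : ¬ (p ≡ -2 * (a : ℤ) + 1 [ZMOD ((a : ℤ) ^ 2)]))
    (h2 : ¬ (p ≡ -2 * (a : ℤ) - 1 [ZMOD ((a : ℤ) ^ 2)])) :
    ∀ r : ℕ, 0 < r →
      Irreducible (C (a : ℚ) * X ^ (2 * r) - C (2 * (a : ℚ) + (p : ℚ)) * X ^ r + C (a : ℚ)) := by
  intro r hr
  have hπ : Prime (a : ℤ) := Nat.prime_iff_prime_int.mp ha
  have hb : ¬ (a : ℤ) ∣ -(2 * a + p) := fun hd =>
    h0 (Int.modEq_zero_iff_dvd.mpr ((dvd_add_right (dvd_mul_left _ _)).mp (dvd_neg.mp hd)))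
  have hb_unit (u : ℤ) (hu : IsUnit u) : ¬ (a : ℤ) ^ 2 ∣ -(2 * a + p) - u := by
    rcases Int.isUnit_iff.mp hu with rfl | rfl <;> intro hd
    · exact h2 (Int.modEq_iff_dvd.mpr (by convert hd using 1; ring))
    · exact h1 (Int.modEq_iff_dvd.mpr (by convert hd using 1; ring))
  have hirr := (IsPrimitive.Int.irreducible_iff_irreducible_map_cast
    (isPrimitive_trinomial hπ.irreducible hb hr)).mp (irreducible_trinomial hπ hb hb_unit hr)
  convert hirr using 1
  simp [trinomial_def, map_ofNat]
  ring
end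

section
/- Let a be a prime number and p an integer such that p ≢ 0 (mod a), p ≢ −2a+1 (mod a²), and p ≢ −2a−1 (mod a²). Then for every positive integer r, the polynomial a·t^{2r} + (2a+p)·t^r + a is irreducible in ℚ[t]. -/
/-!
Write `F = a t^{2r} + b t^r + a` with `b = 2a + p`. Since `a` is prime and `a ∤ b`, `F` is
primitive, so by Gauss's lemma it suffices to rule out a factorisation `F = G H` in `ℤ[t]` into
factors of positive degree. Modulo `a` we have `F ≡ b t^r` with `b` a unit, so `G` and `H` reduce to
monomials of degrees `m` and `n` with `m + n = r`. As `a = lc(G) lc(H)` is prime, one leading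
coefficient, say `lc(G)`, is a unit; this forces `m = deg G > 0`, so `a ∣ G(0)`, and then
`G(0) H(0) = a` makes `H(0)` a unit, so `n = 0` and `m = r`. In the sum `b = Σ G_i H_{r-i}` every
term but `G_r H_0 = lc(G) H(0)` is a product of two multiples of `a`, hence `b ≡ ±1 (mod a²)`,
which the hypotheses exclude.
-/

open Polynomial

namespace Polynomial

theorem natTrailingDegree_eq_natDegree_of_mul_eq_C_mul_X_pow {R : Type*} [Semiring R]
    [NoZeroDivisors R] {f g : R[X]} {u : R} {r : ℕ} (hu : u ≠ 0)
    (h : f * g = C u * X ^ r) : f.natTrailingDegree = f.natDegree := by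
  have : Nontrivial R := ⟨⟨u, 0, hu⟩⟩
  have hfg : f * g ≠ 0 := h ▸ mul_ne_zero (C_ne_zero.mpr hu) (pow_ne_zero _ X_ne_zero)
  have hf : f ≠ 0 := left_ne_zero_of_mul hfg
  have hg : g ≠ 0 := right_ne_zero_of_mul hfg
  have htrail := natTrailingDegree_mul hf hg
  have hdeg := natDegree_mul hf hg
  rw [h, natTrailingDegree_mul_X_pow (C_ne_zero.mpr hu), natTrailingDegree_C] at htrail
  rw [h, natDegree_C_mul_X_pow _ _ hu] at hdeg
  have := natTrailingDegree_le_natDegree f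
  have := natTrailingDegree_le_natDegree g
  omega

theorem coeff_eq_zero_of_natTrailingDegree_eq_natDegree {R : Type*} [Semiring R] {f : R[X]}
    (hf : f.natTrailingDegree = f.natDegree) {i : ℕ} (hi : i ≠ f.natDegree) : f.coeff i = 0 := by
  rcases hi.lt_or_gt with hlt | hgt
  · exact coeff_eq_zero_of_lt_natTrailingDegree (hf ▸ hlt)
  · exact coeff_eq_zero_of_natDegree_lt hgt

theorem sq_dvd_coeff_mul_sub_coeff_mul_coeff {R : Type*} [CommRing R] {a : R} {G H : R[X]}
    {m n : ℕ} (hG : ∀ i ≠ m, a ∣ G.coeff i) (hH : ∀ j ≠ n, a ∣ H.coeff j) :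
    a ^ 2 ∣ (G * H).coeff (m + n) - G.coeff m * H.coeff n := by
  have hmem : (m, n) ∈ Finset.HasAntidiagonal.antidiagonal (m + n) :=
    Finset.HasAntidiagonal.mem_antidiagonal.mpr rfl
  rw [coeff_mul, ← Finset.add_sum_erase _ _ hmem, add_sub_cancel_left, sq]
  refine Finset.dvd_sum fun x hx => ?_
  obtain ⟨hne, hx⟩ := Finset.mem_erase.mp hx
  rw [Finset.HasAntidiagonal.mem_antidiagonal] at hx
  have hx1 : x.1 ≠ m := fun h => hne (Prod.ext h (by omega))
  have hx2 : x.2 ≠ n := fun h => hne (Prod.ext (by omega) h)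
  exact mul_dvd_mul (hG _ hx1) (hH _ hx2)

theorem IsPrimitive.natDegree_pos_of_dvd_of_not_isUnit {R : Type*} [CommSemiring R] {f g : R[X]}
    (hf : f.IsPrimitive) (hg : g ∣ f) (hgu : ¬ IsUnit g) : 0 < g.natDegree := by
  refine Nat.pos_of_ne_zero fun h => hgu ?_
  obtain ⟨c, rfl⟩ := natDegree_eq_zero.mp h
  exact (hf c hg).map C

end Polynomial

theorem Prime.exists_dvd_coeff_of_C_dvd_mul_sub {R : Type*} [CommRing R] {a : R} (ha : Prime a)
    {G H : R[X]} {u : R} {r : ℕ} (hu : ¬ a ∣ u) (hGH : C a ∣ G * H - C u * X ^ r) :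
    ∃ m n, m + n = r ∧ (∀ i ≠ m, a ∣ G.coeff i) ∧ ∀ j ≠ n, a ∣ H.coeff j := by
  have : (Ideal.span {a}).IsPrime := (Ideal.span_singleton_prime ha.ne_zero).mpr ha
  set π := Ideal.Quotient.mk (Ideal.span {a})
  have hπu : π u ≠ 0 := by rwa [Ne, Ideal.Quotient.eq_zero_iff_dvd]
  have hmod : G.map π * H.map π = C (π u) * X ^ r := by
    obtain ⟨K, hK⟩ := hGH
    have := congrArg (map π) hK
    simpa only [Polynomial.map_sub, Polynomial.map_mul, Polynomial.map_pow, map_C, map_X, π,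
      Ideal.Quotient.mk_singleton_self, C_0, zero_mul, sub_eq_zero] using this
  have hG := natTrailingDegree_eq_natDegree_of_mul_eq_C_mul_X_pow hπu hmod
  have hH := natTrailingDegree_eq_natDegree_of_mul_eq_C_mul_X_pow hπu ((mul_comm _ _).trans hmod)
  refine ⟨(G.map π).natDegree, (H.map π).natDegree, ?_, fun i hi => ?_, fun j hj => ?_⟩
  · have hne : G.map π * H.map π ≠ 0 :=
      hmod ▸ mul_ne_zero (C_ne_zero.mpr hπu) (pow_ne_zero _ X_ne_zero)
    rw [← natDegree_mul (left_ne_zero_of_mul hne) (right_ne_zero_of_mul hne), hmod,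
      natDegree_C_mul_X_pow _ _ hπu]
  · rw [← Ideal.Quotient.eq_zero_iff_dvd, ← coeff_map]
    exact coeff_eq_zero_of_natTrailingDegree_eq_natDegree hG hi
  · rw [← Ideal.Quotient.eq_zero_iff_dvd, ← coeff_map]
    exact coeff_eq_zero_of_natTrailingDegree_eq_natDegree hH hj

namespace Polynomial

noncomputable def palindromicTrinomial {R : Type*} [Semiring R] (a b : R) (r : ℕ) : R[X] :=
  C a * X ^ (2 * r) + C b * X ^ r + C a

section CommRing

variable {R : Type*} [CommRing R] {a b : R} {r : ℕ}

theorem palindromicTrinomial_sub_C_mul_X_pow :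
    palindromicTrinomial a b r - C b * X ^ r = C a * (X ^ (2 * r) + 1) := by
  rw [palindromicTrinomial]; ring

theorem map_palindromicTrinomial {S : Type*} [CommRing S] (f : R →+* S) :
    (palindromicTrinomial a b r).map f = palindromicTrinomial (f a) (f b) r := by
  simp only [palindromicTrinomial, Polynomial.map_add, Polynomial.map_mul, Polynomial.map_pow,
    map_C, map_X]

theorem coeff_palindromicTrinomial_zero (hr : 0 < r) :
    (palindromicTrinomial a b r).coeff 0 = a := by
  simp [palindromicTrinomial, coeff_X_pow, coeff_C, hr.ne, hr.ne']

theorem coeff_palindromicTrinomial_self (hr : 0 < r) :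
    (palindromicTrinomial a b r).coeff r = b := by
  simp [palindromicTrinomial, coeff_X_pow, coeff_C, hr.ne', show r ≠ 2 * r by omega]

theorem coeff_palindromicTrinomial_two_mul (hr : 0 < r) :
    (palindromicTrinomial a b r).coeff (2 * r) = a := by
  simp [palindromicTrinomial, coeff_X_pow, coeff_C, hr.ne', show 2 * r ≠ r by omega]

theorem natDegree_palindromicTrinomial (ha : a ≠ 0) (hr : 0 < r) :
    (palindromicTrinomial a b r).natDegree = 2 * r :=
  natDegree_eq_of_le_of_coeff_ne_zero (by rw [palindromicTrinomial]; compute_degree; omega)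
    (by rwa [coeff_palindromicTrinomial_two_mul hr])

theorem leadingCoeff_palindromicTrinomial (ha : a ≠ 0) (hr : 0 < r) :
    (palindromicTrinomial a b r).leadingCoeff = a := by
  rw [leadingCoeff, natDegree_palindromicTrinomial ha hr, coeff_palindromicTrinomial_two_mul hr]

theorem isPrimitive_palindromicTrinomial (hr : 0 < r) (hab : IsRelPrime a b) :
    (palindromicTrinomial a b r).IsPrimitive := by
  intro c hc
  rw [C_dvd_iff_dvd_coeff] at hc
  exact hab (by simpa only [coeff_palindromicTrinomial_zero hr] using hc 0)
    (by simpa only [coeff_palindromicTrinomial_self hr] using hc r)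

end CommRing

section IsDomain

variable {R : Type*} [CommRing R] [IsDomain R] {a b : R} {r : ℕ}

theorem exists_isUnit_sq_dvd_sub_of_mul_eq_palindromicTrinomial (ha : Prime a) (hb : ¬ a ∣ b)
    (hr : 0 < r) {G H : R[X]} (hGH : G * H = palindromicTrinomial a b r)
    (hG : 0 < G.natDegree) (hGlc : IsUnit G.leadingCoeff) :
    ∃ u, IsUnit u ∧ a ^ 2 ∣ b - u := by
  obtain ⟨m, n, hmn, hGa, hHa⟩ := ha.exists_dvd_coeff_of_C_dvd_mul_sub hb
    (by rw [hGH, palindromicTrinomial_sub_C_mul_X_pow]; exact dvd_mul_right _ _)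
  have hm : m = G.natDegree := by
    by_contra h
    exact ha.not_isUnit (isUnit_of_dvd_unit (hGa _ (Ne.symm h)) hGlc)
  have hH0 : IsUnit (H.coeff 0) := by
    obtain ⟨k, hk⟩ := hGa 0 (by omega)
    have hconst : a * (k * H.coeff 0) = a * 1 := by
      rw [← mul_assoc, ← hk, ← mul_coeff_zero, hGH, coeff_palindromicTrinomial_zero hr, mul_one]
    exact IsUnit.of_mul_eq_one_right _ (mul_left_cancel₀ ha.ne_zero hconst)
  have hn : n = 0 := by
    by_contra h
    exact ha.not_isUnit (isUnit_of_dvd_unit (hHa 0 (Ne.symm h)) hH0)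
  refine ⟨G.leadingCoeff * H.coeff 0, hGlc.mul hH0, ?_⟩
  have := sq_dvd_coeff_mul_sub_coeff_mul_coeff hGa hHa
  rwa [hGH, hmn, coeff_palindromicTrinomial_self hr, hm, hn] at this

theorem irreducible_palindromicTrinomial (ha : Prime a) (hb : ¬ a ∣ b)
    (hbu : ∀ u, IsUnit u → ¬ a ^ 2 ∣ b - u) (hr : 0 < r) :
    Irreducible (palindromicTrinomial a b r) := by
  have hprim := isPrimitive_palindromicTrinomial hr (ha.irreducible.isRelPrime_iff_not_dvd.mpr hb)
  refine ⟨fun hunit => ?_, fun G H hGH => ?_⟩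
  · have := natDegree_eq_zero_of_isUnit hunit
    rw [natDegree_palindromicTrinomial ha.ne_zero hr] at this
    omega
  · by_contra! hGH_units
    have hG := hprim.natDegree_pos_of_dvd_of_not_isUnit (hGH ▸ dvd_mul_right G H) hGH_units.1
    have hH := hprim.natDegree_pos_of_dvd_of_not_isUnit (hGH ▸ dvd_mul_left H G) hGH_units.2
    have hlc : a = G.leadingCoeff * H.leadingCoeff := by
      rw [← leadingCoeff_mul, ← hGH, leadingCoeff_palindromicTrinomial ha.ne_zero hr]
    obtain ⟨u, hu, hdvd⟩ := (ha.irreducible.isUnit_or_isUnit hlc).elim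
      (exists_isUnit_sq_dvd_sub_of_mul_eq_palindromicTrinomial ha hb hr hGH.symm hG)
      (exists_isUnit_sq_dvd_sub_of_mul_eq_palindromicTrinomial ha hb hr
        ((mul_comm H G).trans hGH.symm) hH)
    exact hbu u hu hdvd

end IsDomain

end Polynomial

/-- Let `a` be a prime and `p` an integer with `p ≢ 0 (mod a)`,
`p ≢ -2a+1 (mod a²)` and `p ≢ -2a-1 (mod a²)`.  Then for every positive integer `r`
the polynomial `a·t^{2r} + (2a+p)·t^r + a` is irreducible in `ℚ[t]`. -/
theorem polynomial_for_torsion_neg_t_irreducible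
    (a : ℕ) (ha : a.Prime) (p : ℤ)
    (h0 : ¬ (p ≡ 0 [ZMOD (a : ℤ)]))
    (h1 : ¬ (p ≡ -2 * (a : ℤ) + 1 [ZMOD ((a : ℤ) ^ 2)]))
    (h2 : ¬ (p ≡ -2 * (a : ℤ) - 1 [ZMOD ((a : ℤ) ^ 2)])) :
    ∀ r : ℕ, 0 < r →
      Irreducible (C (a : ℚ) * X ^ (2 * r) + C (2 * (a : ℚ) + (p : ℚ)) * X ^ r + C (a : ℚ)) := by
  intro r hr
  have haZ : Prime (a : ℤ) := Nat.prime_iff_prime_int.mp ha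
  have hb : ¬ (a : ℤ) ∣ 2 * a + p := fun h =>
    h0 (Int.modEq_zero_iff_dvd.mpr ((dvd_add_right (dvd_mul_left _ _)).mp h))
  have hbu : ∀ u : ℤ, IsUnit u → ¬ (a : ℤ) ^ 2 ∣ 2 * a + p - u := by
    rintro u hu hdvd
    rcases Int.isUnit_iff.mp hu with rfl | rfl
    · exact h1 (Int.modEq_iff_dvd.mpr (by convert hdvd using 1; ring)).symm
    · exact h2 (Int.modEq_iff_dvd.mpr (by convert hdvd using 1; ring)).symm
  have hirr := irreducible_palindromicTrinomial haZ hb hbu hr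
  have hprim := isPrimitive_palindromicTrinomial hr (haZ.irreducible.isRelPrime_iff_not_dvd.mpr hb)
  convert (IsPrimitive.Int.irreducible_iff_irreducible_map_cast hprim).mp hirr using 1
  rw [map_palindromicTrinomial]
  simp only [palindromicTrinomial, eq_intCast, Int.cast_natCast,
    Int.cast_add, Int.cast_mul, Int.cast_ofNat]
end

section
/- Let p ∈ ℚ[t] be an irreducible polynomial, let w ∈ ℂ be a root of p, let r be a positive integer, and let q ∈ ℚ[t] be an irreducible factor of p(t^r). Then there exists z ∈ ℂ such that q(z) = 0 and z^r = w. -/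
/-!
Let `α` be the root of `q` in `K = ℚ[t]/(q)`. Since `q ∣ p(t^r)`, `α^r` is a root of the irreducible
`p`, so it is conjugate to `w`: some embedding `φ : K → ℂ` sends `α^r` to `w`. Take `z = φ α`.
-/

open Polynomial

theorem exists_algHom_apply_eq_of_irreducible {F E Ω : Type*} [Field F] [Field E] [Field Ω]
    [IsAlgClosed Ω] [Algebra F E] [Algebra F Ω] [Algebra.IsAlgebraic F E] {p : F[X]}
    (hp : Irreducible p) {x : E} (hx : aeval x p = 0) {y : Ω} (hy : aeval y p = 0) :
    ∃ φ : E →ₐ[F] Ω, φ x = y := by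
  refine IntermediateField.exists_algHom_of_splits_of_aeval
    (fun s ↦ ⟨Algebra.IsIntegral.isIntegral s, IsAlgClosed.splits _⟩) ?_
  rw [← minpoly.eq_of_irreducible hp hx, map_mul, hy, zero_mul]

theorem exists_root_of_irreducible_factor_of_comp_pow_general
    (p : ℚ[X]) (hp : Irreducible p) (w : ℂ) (hw : aeval w p = 0)
    (r : ℕ) (q : ℚ[X]) (hq : Irreducible q) (hqd : q ∣ p.comp (X ^ r)) :
    ∃ z : ℂ, aeval z q = 0 ∧ z ^ r = w := by
  have : Fact (Irreducible q) := ⟨hq⟩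
  set α := AdjoinRoot.root q
  have hαq : aeval α q = 0 := AdjoinRoot.aeval_eq q |>.trans AdjoinRoot.mk_self
  have hαp : aeval (α ^ r) p = 0 := by
    simpa [aeval_comp] using aeval_eq_zero_of_dvd_aeval_eq_zero hqd hαq
  obtain ⟨φ, hφ⟩ := exists_algHom_apply_eq_of_irreducible hp hαp hw
  exact ⟨φ α, by rw [aeval_algHom_apply, hαq, map_zero], by rw [← map_pow, hφ]⟩

/-- If `p ∈ ℚ[t]` is irreducible, `w ∈ ℂ` is a root of `p`, `r` is a
positive integer and `q` is an irreducible factor of `p(t^r)`, then `q` has a root `z ∈ ℂ`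
with `z^r = w`. -/
theorem exists_root_of_irreducible_factor_of_comp_pow
    (p : ℚ[X]) (hp : Irreducible p) (w : ℂ) (hw : aeval w p = 0)
    (r : ℕ) (hr : 0 < r) (q : ℚ[X]) (hq : Irreducible q) (hqd : q ∣ p.comp (X ^ r)) :
    ∃ z : ℂ, aeval z q = 0 ∧ z ^ r = w :=
  exists_root_of_irreducible_factor_of_comp_pow_general p hp w hw r q hq hqd
end

section
/- Let λ ∈ ℚ[t] be an irreducible polynomial and c a positive integer. Then the following are equivalent: (i) for every positive integer r, the polynomial λ(t^r) has an irreducible factor in ℚ[t] which is reciprocal; (ii) there exists a sequence α = (α_i)_{i≥1} of nonzero reciprocal algebraic numbers in ℂ, indexed by the positive integers, satisfying (α_{ri})^r = α_i for all positive integers r and i, such that λ(α_c) = 0. -/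
open Polynomial CategoryTheory

/-!
If `α` is a compatible sequence, then `α_{rc}` is a reciprocal root of `λ(t^r)`, and its minimal
polynomial is the required factor. Conversely, condition (i) says that the finite sets
`S_n = {w reciprocal : λ(w^n) = 0}` are all nonempty, and `w ↦ w^r` maps `S_{ri}` into `S_i`
because powers of reciprocal numbers are reciprocal. By Kőnig's lemma for this inverse system,
indexed by the positive integers ordered by divisibility, there are `β_n ∈ S_n` with
`β_{ri}^r = β_i`, and `α_i = β_i^c` is the required sequence.
-/

/-- A nonzero algebraic number `z ∈ ℂ` is *reciprocal* if `z` and `z⁻¹` have the same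
minimal polynomial over `ℚ`. -/
def IsReciprocalNum (z : ℂ) : Prop :=
  z ≠ 0 ∧ IsAlgebraic ℚ z ∧ minpoly ℚ z = minpoly ℚ z⁻¹

theorem IsConjRoot.aeval {K L : Type*} [Field K] [Field L] [Algebra K L] {x y : L}
    (hx : IsIntegral K x) (h : IsConjRoot K x y) (p : K[X]) :
    IsConjRoot K (aeval x p) (aeval y p) := by
  have : Fact (Irreducible (minpoly K x)) := ⟨minpoly.irreducible hx⟩
  let φ := AdjoinRoot.liftAlgHom (minpoly K x) (Algebra.ofId K L) x (minpoly.aeval K x)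
  let ψ := AdjoinRoot.liftAlgHom (minpoly K x) (Algebra.ofId K L) y h.aeval_eq_zero
  have hφ : φ (Polynomial.aeval (AdjoinRoot.root _) p) = Polynomial.aeval x p := by
    rw [← Polynomial.aeval_algHom_apply]
    exact congrArg (Polynomial.aeval · p) (AdjoinRoot.liftAlgHom_root _ _ _ _)
  have hψ : ψ (Polynomial.aeval (AdjoinRoot.root _) p) = Polynomial.aeval y p := by
    rw [← Polynomial.aeval_algHom_apply]
    exact congrArg (Polynomial.aeval · p) (AdjoinRoot.liftAlgHom_root _ _ _ _)
  rw [IsConjRoot, ← hφ, ← hψ, minpoly.algHom_eq φ φ.toRingHom.injective,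
    minpoly.algHom_eq ψ ψ.toRingHom.injective]

theorem IsReciprocalNum.pow {z : ℂ} (h : IsReciprocalNum z) (k : ℕ) :
    IsReciprocalNum (z ^ k) := by
  obtain ⟨hz, halg, hconj⟩ := h
  refine ⟨pow_ne_zero k hz, (halg.isIntegral.pow k).isAlgebraic, ?_⟩
  have := IsConjRoot.aeval halg.isIntegral hconj (X ^ k)
  rwa [map_pow, map_pow, aeval_X, aeval_X, inv_pow] at this

theorem exists_reciprocal_irreducible_dvd_iff (p : ℚ[X]) :
    (∃ q : ℚ[X], Irreducible q ∧ q ∣ p ∧ ∃ w : ℂ, w ≠ 0 ∧ aeval w q = 0 ∧ aeval w⁻¹ q = 0) ↔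
      ∃ w : ℂ, IsReciprocalNum w ∧ aeval w p = 0 := by
  constructor
  · rintro ⟨q, hq, ⟨s, rfl⟩, w, hw, hwq, hwq'⟩
    refine ⟨w, ⟨hw, ⟨q, hq.ne_zero, hwq⟩, ?_⟩, by rw [map_mul, hwq, zero_mul]⟩
    rw [← minpoly.eq_of_irreducible hq hwq, ← minpoly.eq_of_irreducible hq hwq']
  · rintro ⟨w, ⟨hw, halg, hconj⟩, hwp⟩
    refine ⟨minpoly ℚ w, minpoly.irreducible halg.isIntegral, minpoly.dvd ℚ w hwp,
      w, hw, minpoly.aeval ℚ w, ?_⟩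
    rw [hconj]
    exact minpoly.aeval ℚ w⁻¹

theorem Polynomial.finite_setOf_aeval_pow_eq_zero {K L : Type*} [Field K] [CommRing L]
    [IsDomain L] [Algebra K L] {p : K[X]} (hp : p ≠ 0) {n : ℕ} (hn : 0 < n) :
    {w : L | aeval (w ^ n) p = 0}.Finite :=
  ((expand K n p).rootSet_finite L).subset fun w hw => by
    rw [Set.mem_ofPred_eq, ← expand_aeval] at hw
    exact mem_rootSet.mpr ⟨(expand_ne_zero hn).mpr hp, hw⟩

theorem PNat.divExact_eq_of_mul_eq {m k n : ℕ+} (h : k * n = m) : m.divExact k = n :=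
  mul_left_cancel (a := k) <| by rw [PNat.mul_div_exact ⟨n, h.symm⟩, h]

theorem PNat.divExact_mul_divExact {a b c : ℕ+} (hba : b ∣ a) (hcb : c ∣ b) :
    a.divExact b * b.divExact c = a.divExact c :=
  (divExact_eq_of_mul_eq <| by
    rw [mul_comm (a.divExact b), ← mul_assoc, PNat.mul_div_exact hcb, PNat.mul_div_exact hba]).symm

-- A type synonym, so that `≤` can be divisibility instead of the usual order of `ℕ+`.
def PNatDvd : Type := ℕ+

namespace PNatDvd

def ofPNat : ℕ+ → PNatDvd := id

def toPNat : PNatDvd → ℕ+ := id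

instance : Preorder PNatDvd where
  le a b := a.toPNat ∣ b.toPNat
  le_refl _ := dvd_refl _
  le_trans _ _ _ := dvd_trans

instance : IsDirectedOrder PNatDvd :=
  ⟨fun a b => ⟨ofPNat (a.toPNat * b.toPNat), dvd_mul_right _ _, dvd_mul_left _ _⟩⟩

instance : Nonempty PNatDvd := ⟨ofPNat 1⟩

end PNatDvd

section PowCompatible

variable {M : Type*} [Monoid M] (S : ℕ+ → Set M)

def powInverseSystem (hpow : ∀ r i : ℕ+, ∀ w ∈ S (r * i), w ^ (r : ℕ) ∈ S i) :
    PNatDvdᵒᵖ ⥤ Type _ where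
  obj j := S j.unop.toPNat
  map {j k} f := TypeCat.ofHom fun w =>
    ⟨w.1 ^ (j.unop.toPNat.divExact k.unop.toPNat : ℕ), hpow _ _ _ <| by
      rw [mul_comm, PNat.mul_div_exact (leOfHom f.unop)]; exact w.2⟩
  map_id j := by
    ext w
    simp [PNat.divExact_eq_of_mul_eq (mul_one j.unop.toPNat)]
  map_comp {j k l} f g := by
    ext w
    simp [← pow_mul, ← PNat.mul_coe,
      PNat.divExact_mul_divExact (leOfHom f.unop) (leOfHom g.unop)]

theorem exists_pow_compatible_of_finite_of_nonempty (hfin : ∀ n, (S n).Finite)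
    (hne : ∀ n, (S n).Nonempty) (hpow : ∀ r i : ℕ+, ∀ w ∈ S (r * i), w ^ (r : ℕ) ∈ S i) :
    ∃ β : ℕ+ → M, (∀ n, β n ∈ S n) ∧ ∀ r i : ℕ+, β (r * i) ^ (r : ℕ) = β i := by
  have : ∀ j, Finite ((powInverseSystem S hpow).obj j) := fun j => (hfin _).to_subtype
  have : ∀ j, Nonempty ((powInverseSystem S hpow).obj j) := fun j => (hne _).to_subtype
  obtain ⟨u, hu⟩ := nonempty_sections_of_finite_inverse_system (powInverseSystem S hpow)
  refine ⟨fun n => (u (.op (PNatDvd.ofPNat n))).1, fun n => (u _).2, fun r i => ?_⟩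
  have hle : PNatDvd.ofPNat i ≤ PNatDvd.ofPNat (r * i) := dvd_mul_left i r
  have h := congrArg Subtype.val (hu (homOfLE hle).op)
  change _ ^ ((r * i).divExact i : ℕ) = _ at h
  rwa [PNat.divExact_eq_of_mul_eq (mul_comm i r)] at h

end PowCompatible

/-- For an irreducible `λ ∈ ℚ[t]` and a positive integer `c`, the
polynomial `λ(t^r)` has a reciprocal irreducible factor for every positive integer `r`
if and only if there is a sequence `α = (α_i)_{i ≥ 1}` of nonzero reciprocal algebraic
numbers with `(α_{r·i})^r = α_i` for all `r, i ≥ 1` such that `λ(α_c) = 0`. -/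
theorem reciprocal_factor_iff_exists_compatible_sequence
    (lam : ℚ[X]) (hlam : Irreducible lam) (c : ℕ+) :
    (∀ r : ℕ+, ∃ q : ℚ[X], Irreducible q ∧ q ∣ lam.comp (X ^ (r : ℕ)) ∧
        ∃ w : ℂ, w ≠ 0 ∧ aeval w q = 0 ∧ aeval w⁻¹ q = 0) ↔
    (∃ α : ℕ+ → ℂ, (∀ i, IsReciprocalNum (α i)) ∧
        (∀ r i : ℕ+, α (r * i) ^ (r : ℕ) = α i) ∧ aeval (α c) lam = 0) := by
  simp only [exists_reciprocal_irreducible_dvd_iff, aeval_comp, map_pow, aeval_X]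
  constructor
  · intro h
    obtain ⟨β, hβS, hβ⟩ := exists_pow_compatible_of_finite_of_nonempty
      (fun n => {w | IsReciprocalNum w ∧ aeval (w ^ (n : ℕ)) lam = 0})
      (fun n => (finite_setOf_aeval_pow_eq_zero hlam.ne_zero n.pos).subset fun _ hw => hw.2)
      h (fun r i w ⟨hw, hroot⟩ => ⟨hw.pow r, by rwa [← pow_mul, ← PNat.mul_coe]⟩)
    exact ⟨fun i => β i ^ (c : ℕ), fun i => (hβS i).1.pow c, fun r i => by rw [pow_right_comm, hβ],
      (hβS c).2⟩
  · rintro ⟨α, hα, hcompat, hroot⟩ r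
    exact ⟨α (r * c), hα _, by rw [hcompat, hroot]⟩
end

section
/- Let a be a prime number and p an integer such that p ≢ 0 (mod a), p ≢ −2a+1 (mod a²), and p ≢ −2a−1 (mod a²). Let λ(t) = a·t² − (2a+p)·t + a, let z ∈ ℂ be a zero of λ, and let c be a positive integer. Then there exists a sequence α = (α_i)_{i≥1} of nonzero reciprocal algebraic numbers in ℂ, indexed by the positive integers, satisfying (α_{ri})^r = α_i for all positive integers r and i, such that α_c = z. -/
open Polynomial

/-!
With `s = (2a + p) / a`, `z` is a root of `X² - sX + 1`, and the congruence conditions on `p`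
rule out a rational root of this quadratic. Take `α_i = z ^ (c / i)`; writing
`c / i = m / n` in lowest terms, `α_i ^ n = z ^ m`.

Hensel's lemma gives an `a`-adic root `y` of `X² - sX + 1` of valuation `-1`. Embedding
`ℚ(z)` into `ℚ_a` by `z ↦ y`, the element `θ = z ^ m` gets valuation `-m`, prime to `n`;
comparing the valuations of `N(α_i) ^ n = θ ^ d`, where `d = [ℚ(z, α_i) : ℚ(z)]`, forces
`d = n`, so `X ^ n - θ` is irreducible over `ℚ(z)`. Its conjugate `X ^ n - θ⁻¹` under
`z ↦ z⁻¹` is coprime to it, and both divide the minimal polynomial of `α_i` over `ℚ`, which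
therefore has degree `2n`. Hence it is `X ^ 2n - S X ^ n + 1` with `S = z ^ m + z ^ (-m) ∈ ℚ`,
a palindromic polynomial, which is then also the minimal polynomial of `α_i⁻¹`.
-/

open IntermediateField

noncomputable def reciprocalQuadratic (s : ℚ) : ℚ[X] := X ^ 2 - C s * X + 1

section reciprocalQuadratic

variable {E : Type*} [Field E] [Algebra ℚ E]

theorem reciprocalQuadratic_monic (s : ℚ) : (reciprocalQuadratic s).Monic := by
  unfold reciprocalQuadratic; monicity!

theorem natDegree_reciprocalQuadratic (s : ℚ) : (reciprocalQuadratic s).natDegree = 2 := by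
  unfold reciprocalQuadratic; compute_degree!

@[simp]
theorem aeval_reciprocalQuadratic (s : ℚ) (w : E) :
    aeval w (reciprocalQuadratic s) = w ^ 2 - algebraMap ℚ E s * w + 1 := by
  simp [reciprocalQuadratic]

theorem ne_zero_of_aeval_reciprocalQuadratic {s : ℚ} {w : E}
    (hw : aeval w (reciprocalQuadratic s) = 0) : w ≠ 0 := by
  rintro rfl
  simp at hw

theorem aeval_inv_reciprocalQuadratic {s : ℚ} {w : E}
    (hw : aeval w (reciprocalQuadratic s) = 0) : aeval w⁻¹ (reciprocalQuadratic s) = 0 := by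
  have hw0 := ne_zero_of_aeval_reciprocalQuadratic hw
  rw [aeval_reciprocalQuadratic] at hw ⊢
  field_simp
  linear_combination hw

theorem aeval_pow_reciprocalQuadratic_dickson {s : ℚ} {w : E}
    (hw : aeval w (reciprocalQuadratic s) = 0) (m : ℕ) :
    aeval (w ^ m) (reciprocalQuadratic ((dickson 1 (1 : ℚ) m).eval s)) = 0 := by
  have hw0 := ne_zero_of_aeval_reciprocalQuadratic hw
  have hs : algebraMap ℚ E s = w + w⁻¹ := by
    rw [aeval_reciprocalQuadratic] at hw
    field_simp
    linear_combination -hw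
  have hS : algebraMap ℚ E ((dickson 1 (1 : ℚ) m).eval s) = w ^ m + w⁻¹ ^ m := by
    rw [← aeval_algebraMap_apply_eq_algebraMap_eval, hs, ← eval_map_algebraMap, map_dickson,
      map_one, dickson_one_one_eval_add_inv _ _ (mul_inv_cancel₀ hw0)]
  rw [aeval_reciprocalQuadratic, hS, inv_pow]
  field_simp
  ring

theorem minpoly_eq_reciprocalQuadratic {s : ℚ} (hs : Irreducible (reciprocalQuadratic s)) {w : E}
    (hw : aeval w (reciprocalQuadratic s) = 0) : minpoly ℚ w = reciprocalQuadratic s :=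
  (minpoly.eq_of_irreducible_of_monic hs hw (reciprocalQuadratic_monic s)).symm

end reciprocalQuadratic

theorem isReciprocalNum_of_minpoly_eq_comp {x : ℂ} {S : ℚ} {n : ℕ} (hn : 0 < n)
    (h : minpoly ℚ x = (reciprocalQuadratic S).comp (X ^ n)) : IsReciprocalNum x := by
  have hG0 : (reciprocalQuadratic S).comp (X ^ n) ≠ 0 :=
    ((reciprocalQuadratic_monic S).comp (monic_X_pow n) (by simp [hn.ne'])).ne_zero
  have hx : IsIntegral ℚ x := by
    by_contra hx
    exact hG0 (h ▸ minpoly.eq_zero hx)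
  have hroot : aeval (x ^ n) (reciprocalQuadratic S) = 0 := by
    simpa [h, aeval_comp] using minpoly.aeval ℚ x
  have hx0 : x ≠ 0 := by
    rintro rfl
    exact ne_zero_of_aeval_reciprocalQuadratic hroot (zero_pow hn.ne')
  refine ⟨hx0, hx.isAlgebraic, ?_⟩
  rw [h]
  refine minpoly.eq_of_irreducible_of_monic (h ▸ minpoly.irreducible hx) ?_ (h ▸ minpoly.monic hx)
  simpa [aeval_comp, inv_pow] using aeval_inv_reciprocalQuadratic hroot

theorem modEq_of_isCoprime_of_dvd {a p u v : ℤ} (ha : a ≠ 0) (huv : IsCoprime u v) (hu : a ∣ u)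
    (h : a * u ^ 2 - (2 * a + p) * u * v + a * v ^ 2 = 0) :
    p ≡ -2 * a + 1 [ZMOD a ^ 2] ∨ p ≡ -2 * a - 1 [ZMOD a ^ 2] := by
  obtain ⟨u, rfl⟩ := hu
  have h' : a ^ 2 * u ^ 2 - (2 * a + p) * u * v + v ^ 2 = 0 := by
    refine (mul_eq_zero.mp ?_).resolve_left ha
    linear_combination h
  have hu : IsUnit u := (huv.of_mul_left_right.pow_right (n := 2)).isUnit_of_dvd' dvd_rfl
    ⟨(2 * a + p) * v - a ^ 2 * u, by linear_combination h'⟩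
  have hv : IsUnit v := (huv.symm.pow_right (n := 2)).isUnit_of_dvd' dvd_rfl
    ⟨(2 * a + p) * u - v, by linear_combination h'⟩
  have he : a ^ 2 - (2 * a + p) * (u * v) + 1 = 0 := by
    linear_combination h' - a ^ 2 * Int.isUnit_sq hu - Int.isUnit_sq hv
  rcases Int.isUnit_iff.mp (hu.mul hv) with he1 | he1 <;> rw [he1] at he
  · exact .inl (Int.modEq_iff_dvd.mpr ⟨-1, by linear_combination he⟩)
  · exact .inr (Int.modEq_iff_dvd.mpr ⟨1, by linear_combination -he⟩)

theorem irreducible_reciprocalQuadratic {a p : ℤ} (ha : Prime a) (h0 : ¬ a ∣ p)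
    (h1 : ¬ p ≡ -2 * a + 1 [ZMOD a ^ 2]) (h2 : ¬ p ≡ -2 * a - 1 [ZMOD a ^ 2]) :
    Irreducible (reciprocalQuadratic ((2 * a + p) / a)) := by
  refine irreducible_of_degree_le_three_of_not_isRoot
    (by simp [natDegree_reciprocalQuadratic]) fun r hr => ?_
  set u := r.num
  set v : ℤ := (r.den : ℤ)
  have huv : IsCoprime u v := Int.isCoprime_iff_gcd_eq_one.mpr r.reduced
  have h : a * u ^ 2 - (2 * a + p) * u * v + a * v ^ 2 = 0 := by
    have hv : (v : ℚ) ≠ 0 := by simp [v]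
    have ha' : (a : ℚ) ≠ 0 := by exact_mod_cast ha.ne_zero
    have hr : r ^ 2 - (2 * a + p) / a * r + 1 = 0 := by simpa [reciprocalQuadratic] using hr
    rw [← Rat.num_div_den r] at hr
    field_simp at hr
    exact_mod_cast
      (by linear_combination hr : (a * u ^ 2 - (2 * a + p) * u * v + a * v ^ 2 : ℚ) = 0)
  have hsymm : a * v ^ 2 - (2 * a + p) * v * u + a * u ^ 2 = 0 := by linear_combination h
  rcases ha.dvd_or_dvd (⟨u ^ 2 + v ^ 2 - 2 * u * v, by linear_combination -h⟩ : a ∣ p * u * v)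
    with hpu | hav
  · rcases ha.dvd_or_dvd hpu with hap | hau
    · exact h0 hap
    · exact (modEq_of_isCoprime_of_dvd ha.ne_zero huv hau h).elim h1 h2
  · exact (modEq_of_isCoprime_of_dvd ha.ne_zero huv.symm hav hsymm).elim h1 h2

section Padic

variable {q : ℕ} [hq : Fact q.Prime]

theorem PadicInt.exists_root_of_quadratic {b c : ℤ_[q]} (hb : ‖b‖ = 1) (hc : ‖c‖ < 1) :
    ∃ r : ℤ_[q], r ^ 2 - b * r + c = 0 ∧ ‖r‖ = 1 := by
  set F : ℤ_[q][X] := X ^ 2 - C b * X + C c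
  have hF : ∀ r, F.aeval r = r ^ 2 - b * r + c := fun r => by simp [F]
  have hF' : F.derivative.aeval b = b := by simp [F]; ring
  obtain ⟨r, hr, hrb, -⟩ :=
    hensels_lemma (F := F) (a := b) (by rw [hF, hF', hb]; simpa [sq] using hc)
  refine ⟨r, (hF r).symm.trans hr, ?_⟩
  rw [hF', hb] at hrb
  simpa [hb, hrb.le] using
    IsUltrametricDist.norm_add_eq_max_of_norm_ne_norm (x := b) (y := r - b) (hb ▸ hrb.ne')

theorem Padic.valuation_eq_neg_one_of_norm_eq {y : ℚ_[q]} (hy : ‖y‖ = q) : y.valuation = -1 := by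
  have hq1 : (1 : ℝ) < q := by exact_mod_cast hq.out.one_lt
  have hy0 : y ≠ 0 := by
    rintro rfl
    simp at hy
    linarith
  rw [Padic.norm_eq_zpow_neg_valuation hy0] at hy
  linarith [zpow_right_injective₀ (by linarith) hq1.ne' (hy.trans (zpow_one _).symm)]

theorem exists_padic_root_reciprocalQuadratic {p : ℤ} (hp : ¬ (q : ℤ) ∣ p) :
    ∃ y : ℚ_[q], aeval y (reciprocalQuadratic ((2 * q + p) / q)) = 0 ∧ y.valuation = -1 := by
  have hb : ‖((2 * q + p : ℤ) : ℤ_[q])‖ = 1 := by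
    rw [PadicInt.norm_intCast_eq_one_iff]
    refine ((Nat.prime_iff_prime_int.mp hq.out).coprime_iff_not_dvd.mpr ?_).symm
    rwa [dvd_add_right (dvd_mul_left _ _)]
  have hc : ‖((q ^ 2 : ℤ) : ℤ_[q])‖ < 1 :=
    PadicInt.norm_intCast_lt_one_iff.mpr (dvd_pow_self _ two_ne_zero)
  obtain ⟨r, hr, hr1⟩ := PadicInt.exists_root_of_quadratic hb hc
  refine ⟨r / q, ?_, Padic.valuation_eq_neg_one_of_norm_eq ?_⟩
  · have hq0 : (q : ℚ_[q]) ≠ 0 := Nat.cast_ne_zero.mpr hq.out.ne_zero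
    have hr' := congrArg ((↑) : ℤ_[q] → ℚ_[q]) hr
    simp only [PadicInt.coe_add, PadicInt.coe_sub, PadicInt.coe_mul, PadicInt.coe_pow,
      PadicInt.coe_intCast, PadicInt.coe_zero] at hr'
    rw [aeval_reciprocalQuadratic, eq_ratCast]
    push_cast at hr' ⊢
    field_simp
    linear_combination hr'
  · rw [norm_div, Padic.norm_p, PadicInt.padic_norm_e_of_padicInt, hr1, one_div, inv_inv]

end Padic

theorem IntermediateField.exists_algHom_adjoin_gen_eq {F E K : Type*} [Field F] [Field E]
    [Field K] [Algebra F E] [Algebra F K] {α : E} (hα : IsIntegral F α) {β : K}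
    (hβ : aeval β (minpoly F α) = 0) : ∃ φ : F⟮α⟯ →ₐ[F] K, φ (AdjoinSimple.gen F α) = β :=
  ⟨_, algHomAdjoinIntegralEquiv_symm_apply_gen F hα ⟨β, mem_aroots.mpr ⟨minpoly.ne_zero hα, hβ⟩⟩⟩

theorem Polynomial.isCoprime_X_pow_sub_C {K : Type*} [Field K] {b c : K} (h : b ≠ c) (n : ℕ) :
    IsCoprime (X ^ n - C b : K[X]) (X ^ n - C c) := by
  simpa using (isCoprime_X_sub_C_of_isUnit_sub (sub_ne_zero.mpr h).isUnit).map (compRingHom (X ^ n))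

theorem two_mul_natDegree_minpoly_le {F K L : Type*} [Field F] [Field K] [Field L] [Algebra F K]
    [Algebra F L] [Algebra K L] [IsScalarTower F K L] {x : L} (hx : IsIntegral F x)
    (σ : K →ₐ[F] L)
    (hcop : IsCoprime ((minpoly K x).map (algebraMap K L)) ((minpoly K x).map (σ : K →+* L))) :
    2 * (minpoly K x).natDegree ≤ (minpoly F x).natDegree := by
  have hdvd := minpoly.dvd_map_of_isScalarTower F K x
  have h₁ := map_dvd (algebraMap K L) hdvd
  have h₂ := map_dvd (σ : K →+* L) hdvd
  rw [Polynomial.map_map, ← IsScalarTower.algebraMap_eq] at h₁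
  rw [Polynomial.map_map, σ.comp_algebraMap] at h₂
  have hne : (minpoly F x).map (algebraMap F L) ≠ 0 := ((minpoly.monic hx).map _).ne_zero
  have hK0 : minpoly K x ≠ 0 := minpoly.ne_zero hx.tower_top
  have := natDegree_le_of_dvd (hcop.mul_dvd h₁ h₂) hne
  rw [natDegree_mul (by simpa using hK0) (by simpa using hK0), natDegree_map, natDegree_map,
    natDegree_map] at this
  omega

theorem minpoly_eq_X_pow_sub_C_of_isCoprime_valuation {q : ℕ} [Fact q.Prime] {K L : Type*}
    [Field K] [Field L] [Algebra K L] (ψ : K →+* ℚ_[q]) {θ : K} {x : L} {n : ℕ} (hn : 0 < n)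
    (hx : x ^ n = algebraMap K L θ) (hθ : IsCoprime (ψ θ).valuation n) :
    minpoly K x = X ^ n - C θ := by
  have hroot : aeval x (X ^ n - C θ) = 0 := by simp [hx]
  have hmonic : (X ^ n - C θ : K[X]).Monic := monic_X_pow_sub_C θ hn.ne'
  have hint : IsIntegral K x := ⟨_, hmonic, hroot⟩
  set d := (minpoly K x).natDegree
  have hgen : AdjoinSimple.gen K x ^ n = algebraMap K K⟮x⟯ θ :=
    (algebraMap K⟮x⟯ L).injective <| by
      rw [map_pow, AdjoinSimple.algebraMap_gen, hx, ← IsScalarTower.algebraMap_apply]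
  have hnorm : Algebra.norm K (AdjoinSimple.gen K x) ^ n = θ ^ d := by
    rw [← map_pow, hgen, Algebra.norm_algebraMap, adjoin.finrank hint]
  have hval : (n : ℤ) * (ψ (Algebra.norm K (AdjoinSimple.gen K x))).valuation
      = d * (ψ θ).valuation := by
    rw [← Padic.valuation_pow, ← Padic.valuation_pow, ← map_pow ψ, ← map_pow ψ, hnorm]
  have hnd : n ∣ d := Int.natCast_dvd_natCast.mp <| hθ.symm.dvd_of_dvd_mul_right ⟨_, hval.symm⟩
  refine (eq_of_monic_of_dvd_of_natDegree_le (minpoly.monic hint) hmonic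
    (minpoly.dvd K x hroot) ?_).symm
  rw [natDegree_X_pow_sub_C]
  exact Nat.le_of_dvd (minpoly.natDegree_pos hint) hnd

section RootsOfPowers

variable {q : ℕ} [Fact q.Prime] {s : ℚ} {y : ℚ_[q]} {z x : ℂ} {m n : ℕ}

theorem two_mul_le_natDegree_minpoly (hs : Irreducible (reciprocalQuadratic s))
    (hz : aeval z (reciprocalQuadratic s) = 0) (hy : aeval y (reciprocalQuadratic s) = 0)
    (hyv : y.valuation = -1) (hm : 0 < m) (hn : 0 < n) (hmn : m.Coprime n) (hx : x ^ n = z ^ m) :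
    2 * n ≤ (minpoly ℚ x).natDegree := by
  have hzint : IsIntegral ℚ z := ⟨_, reciprocalQuadratic_monic s, hz⟩
  have hzmin := minpoly_eq_reciprocalQuadratic hs hz
  obtain ⟨ψ, hψ⟩ := exists_algHom_adjoin_gen_eq hzint (β := y) (by rwa [hzmin])
  obtain ⟨τ, hτ⟩ := exists_algHom_adjoin_gen_eq hzint (β := z⁻¹)
    (by rw [hzmin]; exact aeval_inv_reciprocalQuadratic hz)
  set g := AdjoinSimple.gen ℚ z
  have hg : algebraMap ℚ⟮z⟯ ℂ g = z := AdjoinSimple.algebraMap_gen ℚ z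
  have hKmin : minpoly ℚ⟮z⟯ x = X ^ n - C (g ^ m) := by
    refine minpoly_eq_X_pow_sub_C_of_isCoprime_valuation (ψ : ℚ⟮z⟯ →+* ℚ_[q]) hn
      (by rw [map_pow, hg, hx]) ?_
    rw [AlgHom.coe_toRingHom, map_pow, hψ, Padic.valuation_pow, hyv, mul_neg_one]
    exact (Nat.isCoprime_iff_coprime.mpr hmn).neg_left
  have hzm : z ^ m ≠ z⁻¹ ^ m := by
    intro h
    have hgm : g ^ m = g⁻¹ ^ m := (algebraMap ℚ⟮z⟯ ℂ).injective <| by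
      rwa [map_pow, map_pow, map_inv₀, hg]
    have := congrArg (fun w => (ψ w).valuation) hgm
    simp [hψ, hyv] at this
    omega
  have hxint : IsIntegral ℚ x := .of_pow hn (hx ▸ hzint.pow m)
  have := two_mul_natDegree_minpoly_le hxint τ
    (by simpa only [hKmin, Polynomial.map_sub, Polynomial.map_pow, map_X, map_C, map_pow, hg,
      AlgHom.coe_toRingHom, hτ] using isCoprime_X_pow_sub_C hzm n)
  rwa [hKmin, natDegree_X_pow_sub_C] at this

theorem isReciprocalNum_of_pow_eq_pow (hs : Irreducible (reciprocalQuadratic s))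
    (hz : aeval z (reciprocalQuadratic s) = 0) (hy : aeval y (reciprocalQuadratic s) = 0)
    (hyv : y.valuation = -1) (hm : 0 < m) (hn : 0 < n) (hmn : m.Coprime n) (hx : x ^ n = z ^ m) :
    IsReciprocalNum x := by
  set G := (reciprocalQuadratic ((dickson 1 (1 : ℚ) m).eval s)).comp (X ^ n)
  have hG : G.Monic := (reciprocalQuadratic_monic _).comp (monic_X_pow n) (by simp [hn.ne'])
  have hxG : aeval x G = 0 := by
    simpa [G, aeval_comp, hx] using aeval_pow_reciprocalQuadratic_dickson hz m
  have hxint : IsIntegral ℚ x := ⟨_, hG, hxG⟩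
  refine isReciprocalNum_of_minpoly_eq_comp hn (eq_of_monic_of_dvd_of_natDegree_le
    (minpoly.monic hxint) hG (minpoly.dvd ℚ x hxG) ?_).symm
  rw [natDegree_comp, natDegree_reciprocalQuadratic, natDegree_X_pow]
  exact two_mul_le_natDegree_minpoly hs hz hy hyv hm hn hmn hx

end RootsOfPowers

/-- Let `a` be a prime and `p` an integer with `p ≢ 0 (mod a)`,
`p ≢ -2a+1 (mod a²)` and `p ≢ -2a-1 (mod a²)`, let `z ∈ ℂ` be a zero of
`λ(t) = a·t² - (2a+p)·t + a`, and let `c` be a positive integer.  Then there is a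
sequence `α = (α_i)_{i ≥ 1}` of nonzero reciprocal algebraic numbers with
`(α_{r·i})^r = α_i` for all `r, i ≥ 1` such that `α_c = z`. -/
theorem exists_compatible_reciprocal_sequence_through_root
    (a : ℕ) (ha : a.Prime) (p : ℤ)
    (h0 : ¬ (p ≡ 0 [ZMOD (a : ℤ)]))
    (h1 : ¬ (p ≡ -2 * (a : ℤ) + 1 [ZMOD ((a : ℤ) ^ 2)]))
    (h2 : ¬ (p ≡ -2 * (a : ℤ) - 1 [ZMOD ((a : ℤ) ^ 2)]))
    (z : ℂ) (hz : (a : ℂ) * z ^ 2 - (2 * (a : ℂ) + (p : ℂ)) * z + (a : ℂ) = 0)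
    (c : ℕ+) :
    ∃ α : ℕ+ → ℂ, (∀ i, IsReciprocalNum (α i)) ∧
      (∀ r i : ℕ+, α (r * i) ^ (r : ℕ) = α i) ∧ α c = z := by
  have := Fact.mk ha
  have h0' : ¬ (a : ℤ) ∣ p := fun h => h0 (Int.modEq_zero_iff_dvd.mpr h)
  have hs := irreducible_reciprocalQuadratic (Nat.prime_iff_prime_int.mp ha) h0' h1 h2
  obtain ⟨y, hy, hyv⟩ := exists_padic_root_reciprocalQuadratic h0'
  have hz' : aeval z (reciprocalQuadratic ((2 * a + p) / a)) = 0 := by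
    have ha0 : (a : ℂ) ≠ 0 := by exact_mod_cast ha.ne_zero
    simp only [aeval_reciprocalQuadratic, eq_ratCast]
    push_cast
    field_simp
    linear_combination hz
  refine ⟨fun i => z ^ ((c : ℂ) / i), fun i => ?_, fun r i => ?_, by simp⟩
  · obtain ⟨g, m, n, hg, hmn, hc, hi⟩ := Nat.exists_coprime' (Nat.gcd_pos_of_pos_left i c.pos)
    have hn : 0 < n := Nat.pos_of_mul_pos_right (hi ▸ i.pos)
    refine isReciprocalNum_of_pow_eq_pow hs hz' (by exact_mod_cast hy) hyv
      (Nat.pos_of_mul_pos_right (hc ▸ c.pos)) hn hmn ?_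
    rw [← Complex.cpow_nat_mul, ← Complex.cpow_natCast, hc, hi]
    congr 1
    have : (g : ℂ) ≠ 0 := by exact_mod_cast hg.ne'
    have : (n : ℂ) ≠ 0 := by exact_mod_cast hn.ne'
    push_cast
    field_simp
  · rw [← Complex.cpow_nat_mul]
    congr 1
    push_cast
    field_simp
end

section
/- Fix ε ∈ {+1, −1}. Let A be an n×n matrix over ℚ such that A − ε·Aᵀ is nonsingular, and let r be a positive integer. Let i_rA be the rn×rn matrix consisting of r×r blocks of size n×n whose (i,j)-block equals A for i ≤ j and equals ε·Aᵀ for i > j. Then the polynomials det(t·(i_rA) − ε·(i_rA)ᵀ) and det(t^r·A − ε·Aᵀ) in ℚ[t] agree up to multiplication by a unit of ℚ[t^{±1}]; that is, there exist a nonzero rational number u and natural numbers k, l such that t^k · det(t·(i_rA) − ε·(i_rA)ᵀ) = u · t^l · det(t^r·A − ε·Aᵀ) in ℚ[t]. -/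
open Polynomial Matrix

/-- For an `n × n` matrix `A` over `ℚ` and `r ≥ 1`, `iMat ε r A` is the `rn × rn`
matrix consisting of `r × r` blocks of size `n × n` whose `(i,j)`-block equals `A`
for `i ≤ j` and `ε·Aᵀ` for `i > j`. -/
def iMat (ε : ℚ) {ι : Type*} (r : ℕ) (A : Matrix ι ι ℚ) :
    Matrix (Fin r × ι) (Fin r × ι) ℚ :=
  Matrix.of fun p q => if p.1 ≤ q.1 then A p.2 q.2 else ε * A q.2 p.2

/-!
When `ε² = 1`, the matrix `t • i_rA - ε • (i_rA)ᵀ` is the Kronecker combination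
`(1 + (t - 1) J) ⊗ (A - ε Aᵀ) + (t - 1) 𝟙 ⊗ ε Aᵀ`, where `J` is the upper triangular matrix of
ones and `𝟙` the matrix of ones. Subtracting from each block row the next one (multiplying by
`J⁻¹` on the left) and replacing the `j`-th block column by `∑_{l ≤ j} t^l` times the `l`-th one
makes it block lower triangular, with diagonal blocks `t^(i+1) (A - ε Aᵀ)` for `i < r - 1` and
`t^r A - ε Aᵀ` last. The column operations multiply the determinant by a power of `t`.
-/

open Finset Kronecker

namespace Matrix

variable {R m ι : Type*} [CommRing R] [Fintype m] [LinearOrder m] [Fintype ι] [DecidableEq ι]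

theorem det_kronecker_add_kronecker_of_isLowerTriangular {P Q : Matrix m m R}
    (hP : P.IsLowerTriangular) (hQ : Q.IsLowerTriangular) (A B : Matrix ι ι R) :
    det (P ⊗ₖ A + Q ⊗ₖ B) = ∏ i, det (P i i • A + Q i i • B) := by
  have hG : (P ⊗ₖ A + Q ⊗ₖ B).BlockTriangular fun p => OrderDual.toDual p.1 :=
    fun p q hpq => by simp [hP hpq, hQ hpq]
  rw [hG.det_fintype]
  refine Fintype.prod_equiv OrderDual.ofDual _ _ fun k => ?_
  let e : ι ≃ {p : m × ι // OrderDual.toDual p.1 = k} :=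
    { toFun := fun a => ⟨(OrderDual.ofDual k, a), rfl⟩
      invFun := fun p => p.1.2
      left_inv := fun _ => rfl
      right_inv := by rintro ⟨⟨i, a⟩, rfl⟩; rfl }
  exact (det_submatrix_equiv_self e _).symm

end Matrix

namespace AlexanderReparametrization

variable (R : Type*) [CommRing R] (r : ℕ)

def upperOnes : Matrix (Fin r) (Fin r) R := of fun i j => if i ≤ j then 1 else 0

def rowDiff : Matrix (Fin r) (Fin r) R :=
  of fun i k => if k = i then 1 else if (k : ℕ) = i + 1 then -1 else 0

variable {R}

def powerCols (t : R) : Matrix (Fin r) (Fin r) R :=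
  of fun l j => if l ≤ j then t ^ (l : ℕ) else 0

variable {r}

theorem rowDiff_mul_apply (M : Matrix (Fin r) (Fin r) R) (i j : Fin r) :
    (rowDiff R r * M) i j = M i j - if h : (i : ℕ) + 1 < r then M ⟨i + 1, h⟩ j else 0 := by
  rw [mul_apply]
  split_ifs with h
  · rw [Fintype.sum_eq_add i ⟨i + 1, h⟩ (by simp [Fin.ext_iff])]
    · simp [rowDiff, Fin.ext_iff, sub_eq_add_neg]
    · intro k hk
      simp only [ne_eq, Fin.ext_iff] at hk
      simp [rowDiff, Fin.ext_iff, hk.1, hk.2]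
  · rw [Fintype.sum_eq_single i]
    · simp [rowDiff]
    · intro k hk
      have : (k : ℕ) ≠ i + 1 := by omega
      simp [rowDiff, hk, this]

theorem rowDiff_mul_upperOnes : rowDiff R r * upperOnes R r = 1 := by
  ext i j
  rw [rowDiff_mul_apply]
  simp only [upperOnes, one_apply, of_apply, Fin.le_def, Fin.ext_iff]
  split_ifs <;> first | (exfalso; omega) | simp

theorem rowDiff_mul_powerCols_add_smul (t : R) :
    rowDiff R r * powerCols r t + (t - 1) • powerCols r t =
      diagonal fun i : Fin r => t ^ ((i : ℕ) + 1) := by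
  ext i j
  rw [Matrix.add_apply, rowDiff_mul_apply]
  simp only [powerCols, diagonal_apply, Matrix.smul_apply, of_apply, Fin.le_def, Fin.ext_iff,
    smul_eq_mul]
  split_ifs <;> first | (exfalso; omega) | ring

theorem rowDiff_mul_ones (m : ℕ) :
    rowDiff R (m + 1) * of (fun _ _ => 1) =
      updateRow (0 : Matrix (Fin (m + 1)) _ R) (Fin.last m) 1 := by
  ext i j
  rw [rowDiff_mul_apply, updateRow_apply]
  simp only [of_apply, Fin.ext_iff, Fin.val_last]
  split_ifs <;> first | (exfalso; omega) | simp

theorem sum_powerCols_apply (t : R) (j : Fin r) :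
    ∑ l, powerCols r t l j = ∑ l ∈ range (j + 1), t ^ l := by
  simp only [powerCols, of_apply, Fin.le_def]
  rw [Fin.sum_univ_eq_sum_range (fun l => if l ≤ (j : ℕ) then t ^ l else 0), ← sum_filter]
  congr 1
  ext l
  simp only [mem_filter, mem_range]
  omega

theorem det_rowDiff : det (rowDiff R r) = 1 := by
  rw [det_of_isUpperTriangular]
  · simp [rowDiff]
  · intro i j hij
    rw [id, id, Fin.lt_def] at hij
    simp only [rowDiff, of_apply, Fin.ext_iff]
    rw [if_neg (by omega), if_neg (by omega)]

theorem det_powerCols (t : R) : det (powerCols r t) = t ^ ∑ l : Fin r, (l : ℕ) := by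
  rw [det_of_isUpperTriangular, ← prod_pow_eq_pow_sum]
  · simp [powerCols]
  · intro i j hij
    exact if_neg (not_le.mpr hij)

theorem rowDiff_mul_one_add_smul_upperOnes_mul_powerCols (t : R) :
    rowDiff R r * (1 + (t - 1) • upperOnes R r) * powerCols r t =
      diagonal fun i : Fin r => t ^ ((i : ℕ) + 1) := by
  rw [mul_add, mul_one, mul_smul_comm, rowDiff_mul_upperOnes, add_mul, smul_mul_assoc, one_mul,
    rowDiff_mul_powerCols_add_smul]

theorem rowDiff_mul_ones_mul_powerCols (t : R) (m : ℕ) :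
    rowDiff R (m + 1) * ((t - 1) • of fun _ _ => 1) * powerCols (m + 1) t =
      updateRow 0 (Fin.last m) fun j : Fin (m + 1) => t ^ ((j : ℕ) + 1) - 1 := by
  ext i j
  rw [mul_smul_comm, smul_mul_assoc, rowDiff_mul_ones, Matrix.smul_apply, mul_apply,
    updateRow_apply]
  split_ifs with hi
  · simp only [hi, updateRow_self, Pi.one_apply, one_mul, sum_powerCols_apply, smul_eq_mul]
    rw [mul_comm, geom_sum_mul]
  · simp [hi]

variable {ι : Type*} [Fintype ι] [DecidableEq ι]

theorem det_diagonal_kronecker_add_updateRow_last_kronecker {m : ℕ} (d v : Fin (m + 1) → R)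
    (C B : Matrix ι ι R) :
    det (diagonal d ⊗ₖ C + updateRow 0 (Fin.last m) v ⊗ₖ B) =
      (∏ i : Fin m, d i.castSucc) ^ Fintype.card ι * det C ^ m *
        det (d (Fin.last m) • C + v (Fin.last m) • B) := by
  have hlower : (updateRow (0 : Matrix (Fin (m + 1)) _ R) (Fin.last m) v).IsLowerTriangular :=
    fun i j (hij : i < j) => by
      rw [updateRow_ne (hij.trans_le (Fin.le_last j)).ne, Matrix.zero_apply]
  rw [det_kronecker_add_kronecker_of_isLowerTriangular (blockTriangular_diagonal d) hlower,
    Fin.prod_univ_castSucc]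
  simp [prod_mul_distrib, prod_pow]

theorem pow_mul_det_upperOnes_kronecker_add (t : R) (m : ℕ) (C B : Matrix ι ι R) :
    t ^ ((∑ i : Fin m, ((i : ℕ) + 1)) * Fintype.card ι) *
        det ((1 + (t - 1) • upperOnes R (m + 1)) ⊗ₖ C + ((t - 1) • of fun _ _ => 1) ⊗ₖ B) =
      t ^ ((∑ i : Fin m, ((i : ℕ) + 1)) * Fintype.card ι) *
        (det C ^ m * det (t ^ (m + 1) • C + (t ^ (m + 1) - 1) • B)) := by
  have hconj : (rowDiff R (m + 1) ⊗ₖ 1) *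
        ((1 + (t - 1) • upperOnes R (m + 1)) ⊗ₖ C + ((t - 1) • of fun _ _ => 1) ⊗ₖ B) *
        (powerCols (m + 1) t ⊗ₖ 1) =
      (diagonal fun i : Fin (m + 1) => t ^ ((i : ℕ) + 1)) ⊗ₖ C +
        updateRow 0 (Fin.last m) (fun j : Fin (m + 1) => t ^ ((j : ℕ) + 1) - 1) ⊗ₖ B := by
    rw [mul_add, add_mul, ← mul_kronecker_mul, ← mul_kronecker_mul, ← mul_kronecker_mul,
      ← mul_kronecker_mul, rowDiff_mul_one_add_smul_upperOnes_mul_powerCols, rowDiff_mul_ones_mul_powerCols,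
      one_mul, one_mul, mul_one, mul_one]
  have hsum : ∑ l : Fin (m + 1), (l : ℕ) = ∑ i : Fin m, ((i : ℕ) + 1) := by
    simp [Fin.sum_univ_succ]
  replace hconj := congrArg det hconj
  rw [det_diagonal_kronecker_add_updateRow_last_kronecker, det_mul, det_mul, det_kronecker,
    det_kronecker, det_rowDiff, det_powerCols, hsum, det_one] at hconj
  simp only [Fin.val_castSucc, Fin.val_last, prod_pow_eq_pow_sum, ← pow_mul] at hconj
  linear_combination hconj

theorem smul_iMat_map_sub {ι S : Type*} [CommRing S] (f : ℚ →+* S) (t : S) {ε : ℚ}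
    (hε : ε * ε = 1) (r : ℕ) (A : Matrix ι ι ℚ) :
    t • (iMat ε r A).map f - f ε • (iMat ε r A)ᵀ.map f =
      (1 + (t - 1) • upperOnes S r) ⊗ₖ (A.map f - f ε • Aᵀ.map f) +
        ((t - 1) • of fun _ _ => 1) ⊗ₖ (f ε • Aᵀ.map f) := by
  have hfε : f ε * f ε = 1 := by rw [← map_mul, hε, map_one]
  ext ⟨i, a⟩ ⟨j, b⟩
  simp only [iMat, upperOnes, Matrix.sub_apply, Matrix.add_apply, Matrix.smul_apply, map_apply,
    transpose_apply, of_apply, kroneckerMap_apply, one_apply, smul_eq_mul]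
  rcases lt_trichotomy i j with hij | rfl | hij
  · simp only [hij.le, hij.ne, not_le.mpr hij, if_true, if_false, map_mul]
    linear_combination (-f (A a b)) * hfε
  · simp only [le_refl, if_true]
    ring
  · simp only [hij.le, hij.ne', not_le.mpr hij, if_true, if_false, map_mul]
    ring

end AlexanderReparametrization

open AlexanderReparametrization in
/-- (Reparametrization formula for Alexander polynomials.)
Fix `ε = ±1`.  If `A` is an `n × n` matrix over `ℚ` with `A - ε·Aᵀ` nonsingular and
`r ≥ 1`, then `det(t·(i_rA) - ε·(i_rA)ᵀ)` and `det(t^r·A - ε·Aᵀ)` agree up to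
multiplication by a unit of `ℚ[t^{±1}]`. -/
theorem alexander_polynomial_reparametrization
    (ε : ℚ) (hε : ε = 1 ∨ ε = -1) (n : ℕ) (A : Matrix (Fin n) (Fin n) ℚ)
    (hA : (A - ε • Aᵀ).det ≠ 0) (r : ℕ) (hr : 0 < r) :
    ∃ (u : ℚ) (k l : ℕ), u ≠ 0 ∧
      (X : ℚ[X]) ^ k *
          ((X : ℚ[X]) • (iMat ε r A).map C - C ε • (iMat ε r A)ᵀ.map C).det
        = C u * (X : ℚ[X]) ^ l *
          (((X : ℚ[X]) ^ r) • A.map C - C ε • Aᵀ.map C).det := by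
  obtain ⟨m, rfl⟩ : ∃ m, r = m + 1 := ⟨r - 1, by omega⟩
  have hε2 : ε * ε = 1 := by rcases hε with rfl | rfl <;> norm_num
  have hdet : C (A - ε • Aᵀ).det = (A.map C - C ε • Aᵀ.map C).det := by
    rw [RingHom.map_det]
    congr 1
    ext
    simp
  refine ⟨(A - ε • Aᵀ).det ^ m, (∑ i : Fin m, ((i : ℕ) + 1)) * Fintype.card (Fin n),
    (∑ i : Fin m, ((i : ℕ) + 1)) * Fintype.card (Fin n), pow_ne_zero m hA, ?_⟩
  rw [smul_iMat_map_sub C X hε2, pow_mul_det_upperOnes_kronecker_add, map_pow, hdet]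
  have hlast : (X : ℚ[X]) ^ (m + 1) • (A.map C - C ε • Aᵀ.map C) +
      ((X : ℚ[X]) ^ (m + 1) - 1) • C ε • Aᵀ.map C =
        (X : ℚ[X]) ^ (m + 1) • A.map C - C ε • Aᵀ.map C := by
    module
  rw [hlast]
  ring
end

section
/- Let A be a Dedekind domain with fraction field K, let σ ∈ A be an element which is not a square in K, let L be a field extension of K of degree 2 containing an element s with s² = σ (so L = K(s)), and let B be the integral closure of A in L. Let 𝔭 be a nonzero prime ideal of A such that 2 ∉ 𝔭 and σ ∉ 𝔭, and suppose there exists x ∈ A with σ − x² ∈ 𝔭. Then the ideals 𝔮₁ = 𝔭B + (x − s)B and 𝔮₂ = 𝔭B + (x + s)B of B are two distinct prime ideals and 𝔭B = 𝔮₁·𝔮₂. -/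
/-!
Since `2σ` is prime to `𝔭`, it suffices to understand `B` up to the conductor of `A[s]`: writing
`b ∈ B` as `c + d s`, the trace `2c` and the norm `c² - σd²` lie in `A`, whence `2σ b ∈ A[s]`.
Modulo `𝔮₁ ∋ x - s` every element of `A[s]` is congruent to an element of `A`, so `A/𝔭 → B/𝔮₁` is
onto and `𝔮₁` is prime as soon as it is proper. Because `(x - s)(x + s) = x² - σ ∈ 𝔭` and
`(x - s) + (x + s) = 2x` is a unit modulo `𝔭`, one has `𝔮₁𝔮₂ = 𝔭B` and `𝔮₁ + 𝔮₂ = B`, so the two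
ideals are distinct once proper. The conjugation `s ↦ -s` exchanges `𝔮₁` and `𝔮₂`, so neither is
`B`, as `𝔭B ≠ B` by lying over.
-/

open Polynomial

theorem RingHom.surjective_of_mul_mem_range {R S : Type*} [Ring R] [Ring S] (g : R →+* S)
    {u v : R} (huv : g v * g u = 1) (h : ∀ y, g u * y ∈ g.range) : Function.Surjective g := by
  intro y
  obtain ⟨r, hr⟩ := h y
  exact ⟨v * r, by rw [map_mul, hr, ← mul_assoc, huv, one_mul]⟩

namespace Ideal

variable {R S : Type*} [CommRing R] [CommRing S]

theorem notMem_of_sub_sq_mem {P : Ideal R} {σ x : R} (hσ : σ ∉ P) (hx : σ - x ^ 2 ∈ P) :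
    x ∉ P := fun hxP =>
  hσ (by simpa using P.add_mem hx (P.pow_mem_of_mem hxP 2 two_pos))

theorem IsMaximal.sup_span_singleton_eq_top {P : Ideal R} (hP : P.IsMaximal) {u : R}
    (hu : u ∉ P) : P ⊔ span {u} = ⊤ :=
  hP.out.2 _ (left_lt_sup.mpr fun h => hu (h (mem_span_singleton_self u)))

theorem sup_span_add_le (I : Ideal R) (a b : R) :
    I ⊔ span {a + b} ≤ (I ⊔ span {a}) ⊔ (I ⊔ span {b}) :=
  sup_le (le_sup_left.trans le_sup_left) <| (span_singleton_le_iff_mem _).mpr <|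
    Submodule.add_mem_sup (mem_sup_right (mem_span_singleton_self a))
      (mem_sup_right (mem_span_singleton_self b))

theorem sup_span_mul_sup_span_eq {I : Ideal R} {a b : R} (hab : a * b ∈ I)
    (hcop : I ⊔ span {a + b} = ⊤) : (I ⊔ span {a}) * (I ⊔ span {b}) = I := by
  refine le_antisymm ?_ ?_
  · rw [sup_mul, mul_sup, mul_sup, span_singleton_mul_span_singleton]
    exact sup_le (sup_le mul_le_left mul_le_left)
      (sup_le mul_le_right ((span_singleton_le_iff_mem _).mpr hab))
  · calc I = I * (I ⊔ span {a + b}) := by rw [hcop, mul_top]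
      _ ≤ I * (I ⊔ span {a}) ⊔ I * (I ⊔ span {b}) := by
        rw [← mul_sup]; exact mul_mono_right (sup_span_add_le I a b)
      _ ≤ (I ⊔ span {a}) * (I ⊔ span {b}) := by
        rw [mul_comm I]
        exact sup_le (mul_mono_right le_sup_left) (mul_mono_left le_sup_left)

theorem map_sup_span_sub_add_add_eq_top (f : R →+* S) {P : Ideal R} (hP : P.IsMaximal) {x : R}
    (h2x : 2 * x ∉ P) (t : S) : P.map f ⊔ span {(f x - t) + (f x + t)} = ⊤ := by
  have h : (f x - t) + (f x + t) = f (2 * x) := by rw [map_mul, map_ofNat]; ring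
  rw [h, ← Set.image_singleton, ← map_span, ← map_sup, hP.sup_span_singleton_eq_top h2x,
    map_top]

theorem map_sup_span_sub_mul_sup_span_add (f : R →+* S) {P : Ideal R} (hP : P.IsMaximal)
    {σ x : R} (h2x : 2 * x ∉ P) (hx : σ - x ^ 2 ∈ P) {t : S} (ht : t ^ 2 = f σ) :
    (P.map f ⊔ span {f x - t}) * (P.map f ⊔ span {f x + t}) = P.map f := by
  refine sup_span_mul_sup_span_eq ?_ (map_sup_span_sub_add_add_eq_top f hP h2x t)
  have h : (f x - t) * (f x + t) = f (-(σ - x ^ 2)) := by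
    rw [map_neg, map_sub, map_pow, ← ht]; ring
  exact h ▸ mem_map_of_mem f (P.neg_mem hx)

theorem isPrime_of_surjective_quotient_comp (f : R →+* S) {P : Ideal R} [P.IsPrime]
    {Q : Ideal S} (hsurj : Function.Surjective ((Quotient.mk Q).comp f))
    (hQ : Q.comap f = P) : Q.IsPrime := by
  set g := (Quotient.mk Q).comp f
  have hker : RingHom.ker g = P := by rw [← RingHom.comap_ker, mk_ker, hQ]
  have hprime : (P.map g).IsPrime := map_isPrime_of_surjective hsurj hker.le
  rw [← hker, RingHom.ker_eq_comap_bot, map_comap_of_surjective g hsurj] at hprime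
  rw [← mk_ker (I := Q), RingHom.ker_eq_comap_bot]
  exact comap_isPrime _ _

end Ideal

section QuadraticElement

variable {K L : Type*} [Field K] [Field L] [Algebra K L] {s : L}

theorem linearIndependent_one_of_notMem_range (hs : s ∉ Set.range (algebraMap K L)) :
    LinearIndependent K ![1, s] := by
  rw [linearIndependent_fin2]
  refine ⟨fun h => hs ⟨0, by simpa using h.symm⟩, fun a ha => hs ⟨a⁻¹, ?_⟩⟩
  have ha0 : a ≠ 0 := by rintro rfl; simp at ha
  simp only [Matrix.cons_val_one, Matrix.cons_val_zero, ← eq_inv_smul_iff₀ ha0] at ha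
  rw [ha, Algebra.algebraMap_eq_smul_one]

theorem exists_eq_add_mul_of_finrank_eq_two (hdeg : Module.finrank K L = 2)
    (hs : s ∉ Set.range (algebraMap K L)) (z : L) :
    ∃ c d : K, z = algebraMap K L c + algebraMap K L d * s := by
  have hspan := (linearIndependent_one_of_notMem_range hs).span_eq_top_of_card_eq_finrank
    (by simp [hdeg])
  obtain ⟨c, hc⟩ :=
    (Submodule.mem_span_range_iff_exists_fun K).mp (hspan.ge (Submodule.mem_top (x := z)))
  exact ⟨c 0, c 1, by simp [← hc, Fin.sum_univ_two, Algebra.smul_def]⟩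

noncomputable def powerBasisOfFinrankEqTwo (hdeg : Module.finrank K L = 2)
    (hs : s ∉ Set.range (algebraMap K L)) : PowerBasis K L where
  gen := s
  dim := 2
  basis := basisOfLinearIndependentOfCardEqFinrank (linearIndependent_one_of_notMem_range hs)
    (by simp [hdeg])
  basis_eq_pow i := by fin_cases i <;> simp [coe_basisOfLinearIndependentOfCardEqFinrank]

theorem minpoly_eq_X_sq_sub_C (hdeg : Module.finrank K L = 2)
    (hs : s ∉ Set.range (algebraMap K L)) {c : K} (hc : s ^ 2 = algebraMap K L c) :
    minpoly K s = X ^ 2 - C c := by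
  let pb := powerBasisOfFinrankEqTwo hdeg hs
  have hroot : aeval s (X ^ 2 - C c) = 0 := by simp [hc]
  refine (eq_of_monic_of_dvd_of_natDegree_le (minpoly.monic pb.isIntegral_gen)
    (monic_X_pow_sub_C c two_ne_zero) (minpoly.dvd K s hroot) ?_).symm
  exact natDegree_X_pow_sub_C.trans_le pb.natDegree_minpoly.ge

theorem exists_algHom_apply_eq_neg (hdeg : Module.finrank K L = 2)
    (hs : s ∉ Set.range (algebraMap K L)) {c : K} (hc : s ^ 2 = algebraMap K L c) :
    ∃ τ : L →ₐ[K] L, τ s = -s := by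
  let pb := powerBasisOfFinrankEqTwo hdeg hs
  have hroot : aeval (-s) (minpoly K pb.gen) = 0 := by
    simp [pb, powerBasisOfFinrankEqTwo, minpoly_eq_X_sq_sub_C hdeg hs hc, hc]
  exact ⟨pb.lift (-s) hroot, pb.lift_gen _ _⟩

end QuadraticElement

section IntegralClosure

variable {A K L : Type*} [CommRing A] [Field K] [Algebra A K] [Field L] [Algebra K L]
  [Algebra A L] [IsScalarTower A K L]

theorem exists_two_mul_mul_eq_add_mul [IsIntegrallyClosed A] [IsFractionRing A K]
    (hdeg : Module.finrank K L = 2) {σ : A} {s : L}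
    (hs : s ∉ Set.range (algebraMap K L)) (hs2 : s ^ 2 = algebraMap A L σ) {b : L}
    (hb : IsIntegral A b) :
    ∃ a₁ a₂ : A, algebraMap A L (2 * σ) * b = algebraMap A L a₁ + algebraMap A L a₂ * s := by
  have mem_A : ∀ y : K, IsIntegral A (algebraMap K L y) → ∃ a : A, algebraMap A K a = y :=
    fun y hy => IsIntegrallyClosed.isIntegral_iff.mp
      ((isIntegral_algebraMap_iff (algebraMap K L).injective).mp hy)
  have hs2' : s ^ 2 = algebraMap K L (algebraMap A K σ) := by
    rw [hs2, IsScalarTower.algebraMap_apply A K L]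
  obtain ⟨c, d, rfl⟩ := exists_eq_add_mul_of_finrank_eq_two hdeg hs b
  obtain ⟨τ, hτ⟩ := exists_algHom_apply_eq_neg hdeg hs hs2'
  set b := algebraMap K L c + algebraMap K L d * s
  have hτb : IsIntegral A (τ b) := hb.map (τ.restrictScalars A)
  obtain ⟨a₁, ha₁⟩ := mem_A (2 * c) <| by
    have htrace : algebraMap K L (2 * c) = b + τ b := by simp [b, hτ, map_ofNat]; ring
    exact htrace ▸ hb.add hτb
  obtain ⟨a₂, ha₂⟩ := mem_A (c ^ 2 - algebraMap A K σ * d ^ 2) <| by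
    have hnorm : algebraMap K L (c ^ 2 - algebraMap A K σ * d ^ 2) = b * τ b := by
      simp [b, hτ]; linear_combination (algebraMap K L d) ^ 2 * hs2'
    exact hnorm ▸ hb.mul hτb
  obtain ⟨a₃, ha₃⟩ : ∃ a₃ : A, algebraMap A K a₃ = 2 * d * algebraMap A K σ := by
    refine IsIntegrallyClosed.isIntegral_iff.mp (IsIntegral.of_pow two_pos ?_)
    have hsq : algebraMap A K ((a₁ ^ 2 - 4 * a₂) * σ) = (2 * d * algebraMap A K σ) ^ 2 := by
      simp [ha₁, ha₂, map_ofNat]; ring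
    exact hsq ▸ isIntegral_algebraMap
  refine ⟨σ * a₁, a₃, ?_⟩
  simp only [IsScalarTower.algebraMap_apply A K L, map_mul, map_ofNat, ha₁, ha₃, b]
  ring

local notation "𝒪" => integralClosure A L

theorem exists_algHom_integralClosure_apply_eq_neg (hdeg : Module.finrank K L = 2)
    {t : 𝒪} (ht : (t : L) ∉ Set.range (algebraMap K L)) {c : K}
    (ht2 : (t : L) ^ 2 = algebraMap K L c) : ∃ φ : 𝒪 →ₐ[A] 𝒪, φ t = -t := by
  obtain ⟨τ, hτ⟩ := exists_algHom_apply_eq_neg hdeg ht ht2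
  exact ⟨(τ.restrictScalars A).mapIntegralClosure, Subtype.ext hτ⟩

theorem map_sup_span_sub_ne_top [IsFractionRing A K] (hdeg : Module.finrank K L = 2) {σ : A}
    {t : 𝒪} (ht : (t : L) ∉ Set.range (algebraMap K L)) (ht2 : (t : L) ^ 2 = algebraMap A L σ)
    {𝔭 : Ideal A} (h𝔭 : 𝔭.IsMaximal) {x : A} (h2x : 2 * x ∉ 𝔭) (hx : σ - x ^ 2 ∈ 𝔭) :
    𝔭.map (algebraMap A 𝒪) ⊔ Ideal.span {algebraMap A 𝒪 x - t} ≠ ⊤ := by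
  set ι := algebraMap A 𝒪
  set q := 𝔭.map ι ⊔ Ideal.span {ι x - t}
  obtain ⟨φ, hφ⟩ := exists_algHom_integralClosure_apply_eq_neg hdeg ht
    (ht2.trans (IsScalarTower.algebraMap_apply A K L σ))
  have hφq : q.map (φ : 𝒪 →+* 𝒪) = 𝔭.map ι ⊔ Ideal.span {ι x + t} := by
    rw [Ideal.map_sup, Ideal.map_map, Ideal.map_span, Set.image_singleton, φ.comp_algebraMap]
    simp [ι, hφ, sub_neg_eq_add]
  have hι_inj : Function.Injective ι := by
    have hinj : Function.Injective (algebraMap A L) := by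
      rw [IsScalarTower.algebraMap_eq A K L]
      exact (algebraMap K L).injective.comp (IsFractionRing.injective A K)
    exact fun a b h => hinj (congrArg Subtype.val h)
  intro htop
  refine h𝔭.ne_top <| (Ideal.map_eq_top_iff ι hι_inj
    (algebraMap_isIntegral_iff.mpr inferInstance)).mp ?_
  rw [← Ideal.map_sup_span_sub_mul_sup_span_add ι h𝔭 h2x hx (Subtype.ext ht2), ← hφq]
  change q * _ = ⊤
  rw [htop, Ideal.top_mul, Ideal.map_top]

theorem surjective_quotient_mk_comp_algebraMap [IsIntegrallyClosed A] [IsFractionRing A K]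
    (hdeg : Module.finrank K L = 2) {σ : A} {t : 𝒪} (ht : (t : L) ∉ Set.range (algebraMap K L))
    (ht2 : (t : L) ^ 2 = algebraMap A L σ) {𝔭 : Ideal A} (h𝔭 : 𝔭.IsMaximal) (h2σ : 2 * σ ∉ 𝔭)
    {x : A} {Q : Ideal 𝒪} (h𝔭Q : 𝔭.map (algebraMap A 𝒪) ≤ Q) (hxQ : algebraMap A 𝒪 x - t ∈ Q) :
    Function.Surjective ((Ideal.Quotient.mk Q).comp (algebraMap A 𝒪)) := by
  set ι := algebraMap A 𝒪
  obtain ⟨v, i, hi, hvi⟩ := h𝔭.exists_inv h2σ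
  refine RingHom.surjective_of_mul_mem_range _ (u := 2 * σ) (v := v) ?_ ?_
  · have hi0 : Ideal.Quotient.mk Q (ι i) = 0 :=
      Ideal.Quotient.eq_zero_iff_mem.mpr (h𝔭Q (Ideal.mem_map_of_mem ι hi))
    simp only [RingHom.comp_apply, ← map_mul, eq_sub_of_add_eq hvi, map_sub, hi0, map_one,
      sub_zero]
  · intro y
    obtain ⟨b, rfl⟩ := Ideal.Quotient.mk_surjective y
    obtain ⟨a₁, a₂, hb⟩ := exists_two_mul_mul_eq_add_mul hdeg ht ht2 b.2
    have hbB : ι (2 * σ) * b = ι a₁ + ι a₂ * t := Subtype.ext hb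
    refine ⟨a₁ + a₂ * x, ?_⟩
    rw [RingHom.comp_apply, RingHom.comp_apply, ← map_mul, Ideal.Quotient.eq, hbB]
    have hdiff : ι (a₁ + a₂ * x) - (ι a₁ + ι a₂ * t) = ι a₂ * (ι x - t) := by
      rw [map_add, map_mul]; ring
    exact hdiff ▸ Q.mul_mem_left _ hxQ

theorem isPrime_map_sup_span_sub [IsIntegrallyClosed A] [IsFractionRing A K]
    (hdeg : Module.finrank K L = 2) {σ : A} {t : 𝒪}
    (ht : (t : L) ∉ Set.range (algebraMap K L)) (ht2 : (t : L) ^ 2 = algebraMap A L σ)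
    {𝔭 : Ideal A} (h𝔭 : 𝔭.IsMaximal) (h2 : (2 : A) ∉ 𝔭) (hσ : σ ∉ 𝔭) {x : A}
    (hx : σ - x ^ 2 ∈ 𝔭) :
    (𝔭.map (algebraMap A 𝒪) ⊔ Ideal.span {algebraMap A 𝒪 x - t}).IsPrime := by
  have := h𝔭.isPrime
  have h2x : 2 * x ∉ 𝔭 := h𝔭.isPrime.mul_notMem h2 (Ideal.notMem_of_sub_sq_mem hσ hx)
  have hq := map_sup_span_sub_ne_top hdeg ht ht2 h𝔭 h2x hx
  refine Ideal.isPrime_of_surjective_quotient_comp (P := 𝔭) (algebraMap A 𝒪) ?_ ?_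
  · exact surjective_quotient_mk_comp_algebraMap hdeg ht ht2 h𝔭 (h𝔭.isPrime.mul_notMem h2 hσ)
      le_sup_left (Ideal.mem_sup_right (Ideal.mem_span_singleton_self _))
  · exact (h𝔭.eq_of_le (Ideal.comap_ne_top _ hq) (Ideal.le_comap_of_map_le le_sup_left)).symm

end IntegralClosure

/-- (Splitting of primes in a quadratic extension.)
Let `A` be a Dedekind domain with fraction field `K`, let `σ ∈ A` be a non-square
in `K`, let `L = K(√σ)` be a quadratic extension of `K` containing `s` with `s² = σ`,
and let `B` be the integral closure of `A` in `L`.  If `𝔭` is a nonzero prime of `A`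
with `2 ∉ 𝔭`, `σ ∉ 𝔭`, and `σ ≡ x² (mod 𝔭)` for some `x ∈ A`, then
`𝔭B` splits as the product of the two distinct primes
`𝔮₁ = 𝔭B + (x - s)B` and `𝔮₂ = 𝔭B + (x + s)B`. -/
theorem prime_splitting_in_quadratic_extension
    (A : Type*) [CommRing A] [IsDedekindDomain A]
    (K : Type*) [Field K] [Algebra A K] [IsFractionRing A K]
    (L : Type*) [Field L] [Algebra K L] [Algebra A L] [IsScalarTower A K L]
    (hdeg : Module.finrank K L = 2)
    (σ : A) (hσ : ¬ ∃ y : K, y ^ 2 = algebraMap A K σ)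
    (s : L) (hs2 : s ^ 2 = algebraMap A L σ)
    (hs : s ∈ integralClosure A L)
    (𝔭 : Ideal A) (hprime : 𝔭.IsPrime) (hbot : 𝔭 ≠ ⊥)
    (h2 : (2 : A) ∉ 𝔭) (hσp : σ ∉ 𝔭)
    (x : A) (hx : σ - x ^ 2 ∈ 𝔭) :
    letI B := integralClosure A L
    letI xB : B := ⟨algebraMap A L x, Subalgebra.algebraMap_mem B x⟩
    letI sB : B := ⟨s, hs⟩
    letI q₁ : Ideal B := Ideal.map (algebraMap A B) 𝔭 ⊔ Ideal.span {xB - sB}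
    letI q₂ : Ideal B := Ideal.map (algebraMap A B) 𝔭 ⊔ Ideal.span {xB + sB}
    q₁ ≠ q₂ ∧ q₁.IsPrime ∧ q₂.IsPrime ∧
      Ideal.map (algebraMap A B) 𝔭 = q₁ * q₂ := by
  set ι := algebraMap A (integralClosure A L)
  set sB : integralClosure A L := ⟨s, hs⟩
  have hxB : (⟨algebraMap A L x, Subalgebra.algebraMap_mem _ x⟩ : integralClosure A L) = ι x :=
    rfl
  rw [hxB]
  have hmax : 𝔭.IsMaximal := hprime.isMaximal hbot
  have hsK : s ∉ Set.range (algebraMap K L) := by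
    rintro ⟨y, rfl⟩
    exact hσ ⟨y, (algebraMap K L).injective <| by
      rw [map_pow, hs2, IsScalarTower.algebraMap_apply A K L]⟩
  have h2x : 2 * x ∉ 𝔭 := hprime.mul_notMem h2 (Ideal.notMem_of_sub_sq_mem hσp hx)
  have hp₁ := isPrime_map_sup_span_sub (t := sB) hdeg hsK hs2 hmax h2 hσp hx
  have hp₂ := isPrime_map_sup_span_sub (t := -sB) hdeg
    (fun ⟨y, hy⟩ => hsK ⟨-y, by simp [hy, sB]⟩) (by simpa using hs2) hmax h2 hσp hx
  rw [sub_neg_eq_add] at hp₂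
  refine ⟨fun h => hp₁.ne_top ?_, hp₁, hp₂,
    (Ideal.map_sup_span_sub_mul_sup_span_add ι hmax h2x hx (Subtype.ext hs2)).symm⟩
  rw [eq_top_iff, ← Ideal.map_sup_span_sub_add_add_eq_top ι hmax h2x sB]
  exact (Ideal.sup_span_add_le _ _ _).trans (sup_le le_rfl h.ge)
end

section
/- Let a be a prime number with a ≡ 1 (mod 4), and let z ∈ ℂ satisfy a·z⁴ − (2a+1)·z² + a = 0 (so z ≠ 0). Let L = ℚ(z) be the subfield of ℂ generated by z over ℚ and K = ℚ(z + z⁻¹) ⊆ L. Then −1 is a norm for L over K; that is, there exists u ∈ L with N_{L/K}(u) = −1. -/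
open IntermediateField Polynomial

/-!
The equation says `a (z - z⁻¹)² = 1`, so `w = a (z - z⁻¹)` satisfies `w² = a`, and `L = K(w)`
because `2z = (z + z⁻¹) + (z - z⁻¹)`. Writing the prime `a = r² + s²` gives rationals with
`x² + 1 = a y²`, and then `u = x + y w` is a root of `X² - 2x X - 1` generating `L` over `K`.
If `[L : K] = 2` this is the minimal polynomial of `u`, so `N_{L/K}(u) = -1`; if `L = K`, then
`-1` is its own norm.
-/

theorem exists_sq_add_one_eq_mul_sq {F : Type*} [Field F] {r s : F} (h : r ^ 2 + s ^ 2 ≠ 0) :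
    ∃ x y : F, x ^ 2 + 1 = (r ^ 2 + s ^ 2) * y ^ 2 := by
  by_cases hs : s = 0
  · subst hs
    have hr : r ≠ 0 := by rintro rfl; simp at h
    exact ⟨0, r⁻¹, by field_simp; ring⟩
  · exact ⟨r / s, s⁻¹, by field_simp⟩

theorem Nat.Prime.exists_rat_sq_add_one_eq_mul_sq {p : ℕ} (hp : p.Prime) (hp4 : p % 4 = 1) :
    ∃ x y : ℚ, x ^ 2 + 1 = p * y ^ 2 := by
  have := Fact.mk hp
  obtain ⟨r, s, hrs⟩ := Nat.Prime.sq_add_sq (p := p) (by omega)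
  have hrs : (r : ℚ) ^ 2 + (s : ℚ) ^ 2 = p := by exact_mod_cast hrs
  rw [← hrs]
  exact exists_sq_add_one_eq_mul_sq (hrs ▸ Nat.cast_ne_zero.mpr hp.ne_zero)

theorem sq_mul_sub_inv_eq_of_quartic_eq_zero {F : Type*} [Field F] {a z : F}
    (hz : a * z ^ 4 - (2 * a + 1) * z ^ 2 + a = 0) : (a * (z - z⁻¹)) ^ 2 = a := by
  rcases eq_or_ne z 0 with rfl | hz0
  · simpa using hz.symm
  · field_simp
    linear_combination a * hz

section Quadratic

variable {K L : Type*} [Field K] [Field L] [Algebra K L] {u : L} {t n : K}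

theorem isIntegral_of_quadratic (hu : u ^ 2 - algebraMap K L t * u + algebraMap K L n = 0) :
    IsIntegral K u :=
  ⟨X ^ 2 - C t * X + C n, by monicity!, by simpa [Algebra.smul_def] using hu⟩

theorem minpoly_eq_of_quadratic (hu : u ^ 2 - algebraMap K L t * u + algebraMap K L n = 0)
    (hK : u ∉ (algebraMap K L).range) : minpoly K u = X ^ 2 - C t * X + C n := by
  have hint := isIntegral_of_quadratic hu
  have hdeg : (X ^ 2 - C t * X + C n : K[X]).natDegree = 2 := by compute_degree!
  have hmonic : (X ^ 2 - C t * X + C n : K[X]).Monic := by monicity!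
  refine (minpoly.unique_of_degree_le_degree_minpoly K u hmonic
    (by simpa [Algebra.smul_def] using hu) ?_).symm
  rw [degree_eq_natDegree hmonic.ne_zero, degree_eq_natDegree (minpoly.ne_zero hint), hdeg]
  exact_mod_cast (minpoly.two_le_natDegree_iff hint).mpr hK

theorem norm_eq_of_quadratic (hu : u ^ 2 - algebraMap K L t * u + algebraMap K L n = 0)
    (hK : u ∉ (algebraMap K L).range) (htop : K⟮u⟯ = ⊤) : Algebra.norm K u = n := by
  have hint := isIntegral_of_quadratic hu
  have hdeg : (X ^ 2 - C t * X + C n : K[X]).natDegree = 2 := by compute_degree!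
  rw [Algebra.norm_eq_norm_adjoin K u, finrank_eq_one_iff_eq_top.mpr htop, pow_one,
    ← adjoin.powerBasis_gen hint, Algebra.PowerBasis.norm_gen_eq_coeff_zero_minpoly,
    adjoin.powerBasis_gen, adjoin.powerBasis_dim, minpoly_gen, minpoly_eq_of_quadratic hu hK,
    hdeg]
  simp

theorem exists_norm_eq_of_quadratic (hu : u ^ 2 - algebraMap K L t * u + algebraMap K L n = 0)
    (htop : K⟮u⟯ = ⊤) : ∃ w : L, Algebra.norm K w = n := by
  by_cases hK : u ∈ (algebraMap K L).range
  · have hbot : (⊥ : IntermediateField K L) = ⊤ := by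
      rwa [← htop, eq_comm, adjoin_simple_eq_bot_iff, mem_bot]
    refine ⟨algebraMap K L n, ?_⟩
    rw [Algebra.norm_algebraMap, bot_eq_top_iff_finrank_eq_one.mp hbot, pow_one]
  · exact ⟨u, norm_eq_of_quadratic hu hK htop⟩

end Quadratic

theorem IntermediateField.adjoin_simple_gen_eq_top (F : Type*) {E : Type*} [Field F] [Field E]
    [Algebra F E] (α : E) : F⟮AdjoinSimple.gen F α⟯ = ⊤ := by
  apply lift_injective
  rw [lift_adjoin_simple, lift_top, AdjoinSimple.coe_gen]

theorem IntermediateField.eq_top_of_adjoin_simple_eq_top {F E : Type*} [Field F] [Field E]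
    [Algebra F E] {K : IntermediateField F E} {M : IntermediateField K E} {β : E}
    (hβ : F⟮β⟯ = ⊤) (h : β ∈ M) : M = ⊤ := by
  apply restrictScalars_injective F
  rwa [restrictScalars_top, eq_top_iff, ← hβ, adjoin_simple_le_iff]

theorem adjoin_add_mul_sub_inv_eq_top {L : Type*} [Field L] [CharZero L] {g : L}
    (hg : ℚ⟮g⟯ = ⊤) {K : IntermediateField ℚ L} (hK : g + g⁻¹ ∈ K) (x : ℚ) {y : ℚ}
    (hy : y ≠ 0) : K⟮x + y * (g - g⁻¹)⟯ = ⊤ := by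
  set u : L := x + y * (g - g⁻¹)
  have hg_eq : 2⁻¹ * (g + g⁻¹) + ((2 * y)⁻¹ : ℚ) * (u - x) = g := by
    have : (y : L) ≠ 0 := Rat.cast_ne_zero.mpr hy
    push_cast [u]
    linear_combination (2⁻¹ * (g - g⁻¹)) * mul_inv_cancel₀ this
  refine eq_top_of_adjoin_simple_eq_top hg (hg_eq ▸ add_mem ?_ ?_)
  · exact mul_mem (by simp) ((K⟮u⟯).algebraMap_mem ⟨_, hK⟩)
  · exact mul_mem (SubfieldClass.ratCast_mem _ _)
      (sub_mem (mem_adjoin_simple_self K u) (SubfieldClass.ratCast_mem _ _))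

/-- Let `a ≡ 1 (mod 4)` be a prime and let `z ∈ ℂ` satisfy
`a·z⁴ - (2a+1)·z² + a = 0`.  Let `L = ℚ(z)` and `K = ℚ(z + z⁻¹) ⊆ L`.  Then `-1`
is a norm for `L` over `K`. -/
theorem neg_one_is_norm
    (a : ℕ) (ha : a.Prime) (ha4 : a % 4 = 1)
    (z : ℂ) (hz : (a : ℂ) * z ^ 4 - (2 * (a : ℂ) + 1) * z ^ 2 + (a : ℂ) = 0) :
    ∃ u : ℚ⟮z⟯,
      Algebra.norm
        (↥ℚ⟮AdjoinSimple.gen ℚ z + (AdjoinSimple.gen ℚ z)⁻¹⟯) u = -1 := by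
  set g := AdjoinSimple.gen ℚ z
  set K := ℚ⟮g + g⁻¹⟯
  have hg : (a : ℚ⟮z⟯) * g ^ 4 - (2 * a + 1) * g ^ 2 + a = 0 :=
    Subtype.ext (by push_cast [g, AdjoinSimple.coe_gen]; exact hz)
  obtain ⟨x, y, hxy⟩ := ha.exists_rat_sq_add_one_eq_mul_sq ha4
  have hy : y ≠ 0 := by rintro rfl; nlinarith [sq_nonneg x]
  have hxyL : (x : ℚ⟮z⟯) ^ 2 + 1 = a * (y : ℚ⟮z⟯) ^ 2 := by
    exact_mod_cast congrArg (fun q : ℚ ↦ (q : ℚ⟮z⟯)) hxy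
  refine exists_norm_eq_of_quadratic (t := ((2 * x : ℚ) : K)) (n := -1) ?_
    (adjoin_add_mul_sub_inv_eq_top (adjoin_simple_gen_eq_top ℚ z) (mem_adjoin_simple_self ℚ _)
      x (mul_ne_zero hy (Nat.cast_ne_zero.mpr ha.ne_zero)))
  simp only [map_ratCast, map_neg, map_one]
  push_cast
  linear_combination (y : ℚ⟮z⟯) ^ 2 * sq_mul_sub_inv_eq_of_quartic_eq_zero hg - hxyL
end

section
/- Let a and p be positive integers, let z = ((2a+p) + √(p(4a+p)))/(2a) ∈ ℝ (the larger real root of a·t² − (2a+p)·t + a), and for each natural number i let z_i = z^{1/2^i} denote the positive real 2^i-th root of z. Define m : ℕ → ℝ by m₀ = (2a+p)² and m_{i+1} = a·(2a + √(m_i)). Then for every i, m_i ≥ 0 and a·(z_i + z_i⁻¹) = √(m_i). -/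
/-- Let `a, p` be positive integers and
`z = ((2a+p) + √(p(4a+p)))/(2a)` the larger real root of `a·t² - (2a+p)·t + a`.
For each `i` let `z_i` be the positive real `2^i`-th root of `z`, and define
`m₀ = (2a+p)²`, `m_{i+1} = a(2a + √(m_i))`.  Then `m_i ≥ 0` and
`a·(z_i + z_i⁻¹) = √(m_i)` for every `i`. -/
theorem tower_of_square_roots
    (a p : ℕ) (ha : 0 < a) (hp : 0 < p)
    (z : ℝ)
    (hz : z = ((2 * (a : ℝ) + (p : ℝ)) + Real.sqrt ((p : ℝ) * (4 * (a : ℝ) + (p : ℝ)))) / (2 * (a : ℝ)))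
    (zi : ℕ → ℝ) (hzi : ∀ i, 0 < zi i ∧ zi i ^ (2 ^ i) = z)
    (m : ℕ → ℝ) (hm0 : m 0 = (2 * (a : ℝ) + (p : ℝ)) ^ 2)
    (hm : ∀ i, m (i + 1) = (a : ℝ) * (2 * (a : ℝ) + Real.sqrt (m i))) :
    ∀ i, 0 ≤ m i ∧ (a : ℝ) * (zi i + (zi i)⁻¹) = Real.sqrt (m i) := by
  obtain ⟨hz0pos, hz0⟩ := hzi 0
  have ha' : (0:ℝ) < a := by exact_mod_cast ha
  have hp' : (0:ℝ) < p := by exact_mod_cast hp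
  have hs : Real.sqrt ((p:ℝ) * (4 * a + p)) ^ 2 = (p:ℝ) * (4 * a + p) :=
    Real.sq_sqrt (by positivity)
  have hquad : (a:ℝ) * z ^ 2 + a = (2 * a + p) * z := by
    set s := Real.sqrt ((p:ℝ) * (4 * a + p)) with hsd
    rw [hz]; field_simp; nlinarith [hs]
  intro i
  induction i with
  | zero =>
    have hz0' : zi 0 = z := by simpa using hz0
    constructor
    · rw [hm0]; positivity
    · rw [hm0, Real.sqrt_sq (by positivity), hz0']
      have hzne : z ≠ 0 := ne_of_gt (hz0' ▸ hz0pos)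
      field_simp
      nlinarith [hquad]
  | succ i ih =>
    obtain ⟨hmi, heq⟩ := ih
    obtain ⟨hpos, hpow⟩ := hzi (i + 1)
    obtain ⟨hposi, hpowi⟩ := hzi i
    have hsq : zi (i + 1) ^ 2 = zi i := by
      have h2 : (zi (i + 1) ^ 2) ^ (2 ^ i) = zi i ^ (2 ^ i) := by
        rw [← pow_mul, show 2 * 2 ^ i = 2 ^ (i + 1) by ring, hpow, hpowi]
      have h3 : StrictMonoOn (fun x : ℝ => x ^ 2 ^ i) (Set.Ici 0) :=
        pow_left_strictMonoOn₀ (by positivity)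
      exact h3.injOn (Set.mem_Ici.mpr (by positivity)) (Set.mem_Ici.mpr hposi.le) h2
    have hne : zi (i + 1) ≠ 0 := ne_of_gt hpos
    have key : m (i + 1) = ((a:ℝ) * (zi (i + 1) + (zi (i + 1))⁻¹)) ^ 2 := by
      rw [hm i, ← heq, ← hsq]
      field_simp
      ring
    constructor
    · rw [key]; positivity
    · rw [key, Real.sqrt_sq (by positivity)]
end
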